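/- arXiv:1601.03108 — 9 statements merged into one kernel-verified Lean document; each statement's English description precedes it below -/
import Mathlib

section
/- Let (M,d) be a metric space such that (i) [A,B] is nonempty for all A,B ∈ M, (ii) for all A,B,C ∈ M there exists O ∈ M with [A,B] ∩ [A,C] = [A,O], and (iii) for all A,B,C ∈ M, if [A,B] ∩ [B,C] = {B} then [A,B] ∪ [B,C] = [A,C]. Then for any three points A, B, C ∈ M the intersection [A,B] ∩ [B,C] ∩ [A,C] is nonempty. -/
/-- Metric segment `[A,B] = {X | d(A,X) + d(X,B) = d(A,B)}`. -/
def seg {M : Type*} (d : M → M → ℝ) (A B : M) : Set M :=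
  {X | d A X + d X B = d A B}

theorem tripod_point_exists
    {M : Type*} (d : M → M → ℝ)
    (hd_eq : ∀ x y, d x y = 0 ↔ x = y)
    (hd_symm : ∀ x y, d x y = d y x)
    (hd_tri : ∀ x y z, d x z ≤ d x y + d y z)
    (h_nonempty : ∀ A B : M, (seg d A B).Nonempty)
    (h_inter : ∀ A B C : M, ∃ O : M, seg d A B ∩ seg d A C = seg d A O)
    (h_union : ∀ A B C : M, seg d A B ∩ seg d B C = {B} →
      seg d A B ∪ seg d B C = seg d A C) :
    ∀ A B C : M, (seg d A B ∩ seg d B C ∩ seg d A C).Nonempty := by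
  intro A B C
  obtain ⟨P, hP⟩ := h_inter B A C
  have hself : ∀ x y : M, y ∈ seg d x y := by
    intro x y
    have : d y y = 0 := (hd_eq y y).mpr rfl
    simp [seg, this]
  have hself' : ∀ x y : M, x ∈ seg d x y := by
    intro x y
    have : d x x = 0 := (hd_eq x x).mpr rfl
    simp [seg, this]
  have hPmem : P ∈ seg d B A ∩ seg d B C := by rw [hP]; exact hself B P
  have hPA : d B P + d P A = d B A := hPmem.1
  have hPC : d B P + d P C = d B C := hPmem.2
  -- seg A P ∩ seg P C = {P}
  have key : seg d A P ∩ seg d P C = {P} := by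
    ext X
    constructor
    · rintro ⟨hX1, hX2⟩
      simp only [seg, Set.mem_setOf_eq] at hX1 hX2
      -- hX1 : d A X + d X P = d A P, hX2 : d P X + d X C = d P C
      have hPXA : d P X + d X A = d P A := by
        have := hd_symm A X; have := hd_symm X P; have := hd_symm A P
        have := hd_symm P X; have := hd_symm X A; have := hd_symm P A
        linarith
      -- X ∈ seg B A
      have hXBA : d B X + d X A = d B A := by
        have t1 := hd_tri B P X
        have t2 := hd_tri B X A
        linarith
      -- X ∈ seg B C
      have hXBC : d B X + d X C = d B C := by
        have t1 := hd_tri B P X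
        have t2 := hd_tri B X C
        linarith
      have hXBP : d B X + d X P = d B P := by
        have : X ∈ seg d B P := by rw [← hP]; exact ⟨hXBA, hXBC⟩
        exact this
      have hXP0 : d X P = 0 := by
        have hs := hd_symm P X
        linarith
      exact Set.mem_singleton_iff.mpr ((hd_eq X P).mp hXP0)
    · rintro rfl
      exact ⟨hself A X, hself' X C⟩
  have hunion := h_union A P C key
  have hPAC : P ∈ seg d A C := by
    rw [← hunion]; exact Or.inl (hself A P)
  have hPAB : P ∈ seg d A B := by
    show d A P + d P B = d A B
    have := hd_symm B P; have := hd_symm P A; have := hd_symm B A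
    have := hd_symm A P; have := hd_symm P B; have := hd_symm A B
    linarith
  have hPBC : P ∈ seg d B C := hPC
  exact ⟨P, ⟨hPAB, hPBC⟩, hPAC⟩
end

section
/- The radial metric d1 on ℝⁿ satisfies the four-point condition: for all A, B, C, D ∈ ℝⁿ, d1(A,B) + d1(C,D) ≤ max(d1(A,C) + d1(B,D), d1(A,D) + d1(B,C)). -/
open Classical in
/-- The radial metric on ℝⁿ. -/
noncomputable def radialDist {n : ℕ} (A B : EuclideanSpace ℝ (Fin n)) : ℝ :=
  if (∃ a : ℝ, A = a • B) ∨ (∃ a : ℝ, B = a • A) then ‖A - B‖ else ‖A‖ + ‖B‖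

open Classical in
/-- Gromov product of the radial metric at the origin. -/
noncomputable def radialGP {n : ℕ} (A B : EuclideanSpace ℝ (Fin n)) : ℝ :=
  if SameRay ℝ A B then min ‖A‖ ‖B‖ else 0

lemma radialGP_nonneg {n : ℕ} (A B : EuclideanSpace ℝ (Fin n)) : 0 ≤ radialGP A B := by
  unfold radialGP
  split
  · exact le_min (norm_nonneg _) (norm_nonneg _)
  · exact le_refl 0

lemma radialGP_symm {n : ℕ} (A B : EuclideanSpace ℝ (Fin n)) :
    radialGP A B = radialGP B A := by
  unfold radialGP
  rw [SameRay.sameRay_comm, min_comm]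

lemma radialDist_eq {n : ℕ} (A B : EuclideanSpace ℝ (Fin n)) :
    radialDist A B = ‖A‖ + ‖B‖ - 2 * radialGP A B := by
  unfold radialDist radialGP
  by_cases hr : SameRay ℝ A B
  · have hc : (∃ a : ℝ, A = a • B) ∨ (∃ a : ℝ, B = a • A) := by
      rcases hr with h0 | h0 | ⟨r, s, hrpos, hspos, h⟩
      · exact Or.inl ⟨0, by simp [h0]⟩
      · exact Or.inr ⟨0, by simp [h0]⟩
      · refine Or.inl ⟨s / r, ?_⟩
        rw [div_eq_inv_mul, ← smul_smul, ← h, smul_smul,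
          inv_mul_cancel₀ hrpos.ne', one_smul]
    rw [if_pos hc, if_pos hr, hr.norm_sub]
    rcases le_total ‖A‖ ‖B‖ with h | h
    · rw [min_eq_left h, abs_of_nonpos (by linarith)]; ring
    · rw [min_eq_right h, abs_of_nonneg (by linarith)]; ring
  · rw [if_neg hr]
    have key : ∀ X Y : EuclideanSpace ℝ (Fin n), ¬ SameRay ℝ X Y →
        ∀ a : ℝ, X = a • Y → ‖X - Y‖ = ‖X‖ + ‖Y‖ := by
      intro X Y h a ha
      have hneg : a < 0 := by
        by_contra hle
        exact h (ha ▸ SameRay.sameRay_nonneg_smul_left Y (not_lt.mp hle))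
      rw [ha]
      have h2 : a • Y - Y = (a - 1) • Y := by rw [sub_smul, one_smul]
      rw [h2, norm_smul, norm_smul, Real.norm_eq_abs, Real.norm_eq_abs,
        abs_of_nonpos (by linarith : a - 1 ≤ 0), abs_of_nonpos hneg.le]
      ring
    split
    · next hc =>
      rcases hc with ⟨a, ha⟩ | ⟨a, ha⟩
      · rw [key A B hr a ha]; ring
      · rw [← norm_neg, neg_sub, key B A (fun h => hr h.symm) a ha]; ring
    · ring

lemma radialGP_ultra {n : ℕ} (A B C : EuclideanSpace ℝ (Fin n)) :
    min (radialGP A C) (radialGP C B) ≤ radialGP A B := by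
  by_cases h1 : SameRay ℝ A C
  · by_cases h2 : SameRay ℝ C B
    · by_cases hC : C = 0
      · refine le_trans (min_le_left _ _) ?_
        unfold radialGP
        rw [if_pos h1, hC, norm_zero]
        exact le_trans (min_le_right _ _) (radialGP_nonneg A B)
      · have hAB : SameRay ℝ A B := h1.trans h2 (fun h => absurd h hC)
        unfold radialGP
        rw [if_pos h1, if_pos h2, if_pos hAB]
        rcases le_total ‖A‖ ‖B‖ with h | h
        · refine le_trans (min_le_left _ _) ?_
          rw [min_eq_left h]
          exact min_le_left _ _
        · refine le_trans (min_le_right _ _) ?_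
          rw [min_eq_right h]
          exact min_le_right _ _
    · refine le_trans (min_le_right _ _) ?_
      unfold radialGP
      rw [if_neg h2]
      exact radialGP_nonneg A B
  · refine le_trans (min_le_left _ _) ?_
    unfold radialGP
    rw [if_neg h1]
    exact radialGP_nonneg A B

lemma aux_four (a b c d x y : ℝ) (h1 : min a d ≤ x) (h2 : min c b ≤ x)
    (h3 : min a c ≤ y) (h4 : min d b ≤ y) : min (a + b) (c + d) ≤ x + y := by
  rw [min_le_iff]
  rcases min_le_iff.mp h1 with h1 | h1 <;> rcases min_le_iff.mp h2 with h2 | h2 <;>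
    rcases min_le_iff.mp h3 with h3 | h3 <;> rcases min_le_iff.mp h4 with h4 | h4 <;>
    rcases le_total x y with hxy | hxy <;>
    first
      | (left; linarith)
      | (right; linarith)

theorem radialDist_four_point_condition {n : ℕ} :
    ∀ A B C D : EuclideanSpace ℝ (Fin n),
      radialDist A B + radialDist C D ≤
        max (radialDist A C + radialDist B D) (radialDist A D + radialDist B C) := by
  intro A B C D
  have h1 : min (radialGP A C) (radialGP C B) ≤ radialGP A B := radialGP_ultra A B C
  have h2 : min (radialGP A D) (radialGP D B) ≤ radialGP A B := radialGP_ultra A B D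
  have h3 : min (radialGP C A) (radialGP A D) ≤ radialGP C D := radialGP_ultra C D A
  have h4 : min (radialGP C B) (radialGP B D) ≤ radialGP C D := radialGP_ultra C D B
  rw [radialGP_symm C A] at h3
  rw [radialGP_symm D B] at h2
  have key := aux_four (radialGP A C) (radialGP B D) (radialGP A D) (radialGP C B)
    (radialGP A B) (radialGP C D) h1 h2 h3 h4
  rw [radialDist_eq A B, radialDist_eq C D, radialDist_eq A C, radialDist_eq B D,
    radialDist_eq A D, radialDist_eq B C, radialGP_symm C B] at *
  rw [le_max_iff]
  rcases min_le_iff.mp key with h | h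
  · left; linarith
  · right; linarith
end

section
/- Let d1 be the radial metric on ℝⁿ and let P1, P2 ∈ ℝⁿ with P2 not lying on the Euclidean segment [0,P1], i.e., there is no t ∈ [0,1] with P2 = t•P1. Then C_{d1}(P1,P2) = {t•P2 : t ∈ ℝ, t ≥ 1}. -/
/-- `C_d(A,B) = {X | d(X,A) = d(X,B) + d(A,B)}`. -/
def Cd {M : Type*} (d : M → M → ℝ) (A B : M) : Set M :=
  {X | d X A = d X B + d A B}

section helpers

variable {n : ℕ}

lemma rd_pos {A B : EuclideanSpace ℝ (Fin n)}
    (h : (∃ a : ℝ, A = a • B) ∨ (∃ a : ℝ, B = a • A)) :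
    radialDist A B = ‖A - B‖ := if_pos h

lemma rd_neg {A B : EuclideanSpace ℝ (Fin n)}
    (h : ¬ ((∃ a : ℝ, A = a • B) ∨ (∃ a : ℝ, B = a • A))) :
    radialDist A B = ‖A‖ + ‖B‖ := if_neg h

lemma col_iff {A B : EuclideanSpace ℝ (Fin n)} (hB : B ≠ 0) :
    ((∃ a : ℝ, A = a • B) ∨ (∃ a : ℝ, B = a • A)) ↔ ∃ s : ℝ, A = s • B := by
  constructor
  · rintro (⟨a, rfl⟩ | ⟨a, ha⟩)
    · exact ⟨a, rfl⟩
    · have ha0 : a ≠ 0 := by rintro rfl; rw [zero_smul] at ha; exact hB ha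
      exact ⟨a⁻¹, by rw [ha, smul_smul, inv_mul_cancel₀ ha0, one_smul]⟩
  · rintro ⟨s, rfl⟩; exact Or.inl ⟨s, rfl⟩

lemma smul_diff_norm (s t : ℝ) (v : EuclideanSpace ℝ (Fin n)) :
    ‖s • v - t • v‖ = |s - t| * ‖v‖ := by
  rw [← sub_smul, norm_smul, Real.norm_eq_abs]

lemma smul_cancel {s t : ℝ} {v : EuclideanSpace ℝ (Fin n)} (hv : v ≠ 0)
    (h : s • v = t • v) : s = t := by
  have h2 : (s - t) • v = 0 := by rw [sub_smul, h, sub_self]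
  rcases smul_eq_zero.mp h2 with h3 | h3
  · exact sub_eq_zero.mp h3
  · exact absurd h3 hv

lemma abs_scalar_iff (s : ℝ) : |s| = |s - 1| + 1 ↔ 1 ≤ s := by
  constructor
  · intro hh
    rcases abs_cases s with ⟨h1, _⟩ | ⟨h1, _⟩ <;>
      rcases abs_cases (s - 1) with ⟨h2, h2'⟩ | ⟨h2, h2'⟩ <;> linarith
  · intro hs
    rw [abs_of_nonneg (by linarith), abs_of_nonneg (by linarith)]; ring

end helpers

theorem Cd_radial_of_not_on_segment {n : ℕ}
    (P1 P2 : EuclideanSpace ℝ (Fin n))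
    (h : ¬ ∃ t : ℝ, t ∈ Set.Icc (0 : ℝ) 1 ∧ P2 = t • P1) :
    Cd radialDist P1 P2 = {X | ∃ t : ℝ, 1 ≤ t ∧ X = t • P2} := by
  have hP2 : P2 ≠ 0 := by
    rintro rfl
    exact h ⟨0, ⟨le_refl 0, zero_le_one⟩, by rw [zero_smul]⟩
  have hN2 : 0 < ‖P2‖ := norm_pos_iff.mpr hP2
  ext X
  simp only [Cd, Set.mem_setOf_eq]
  by_cases hcol : (∃ a : ℝ, P1 = a • P2) ∨ (∃ a : ℝ, P2 = a • P1)
  · by_cases hP1 : P1 = 0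
    · subst hP1
      have e1 : radialDist X 0 = ‖X‖ := by
        rw [rd_pos (Or.inr ⟨0, (zero_smul ℝ X).symm⟩), sub_zero]
      have e2 : radialDist (0 : EuclideanSpace ℝ (Fin n)) P2 = ‖P2‖ := by
        rw [rd_pos (Or.inl ⟨0, (zero_smul ℝ P2).symm⟩), zero_sub, norm_neg]
      rw [e1, e2]
      by_cases hX : ∃ s : ℝ, X = s • P2
      · obtain ⟨s, rfl⟩ := hX
        have e3 : radialDist (s • P2) P2 = |s - 1| * ‖P2‖ := by
          rw [rd_pos (Or.inl ⟨s, rfl⟩)]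
          have := smul_diff_norm s 1 P2
          rwa [one_smul] at this
        rw [e3, norm_smul, Real.norm_eq_abs]
        constructor
        · intro hh
          have key : |s| = |s - 1| + 1 := by
            have := mul_right_cancel₀ hN2.ne' (show |s| * ‖P2‖ = (|s - 1| + 1) * ‖P2‖ by
              rw [add_mul, one_mul]; exact hh)
            exact this
          exact ⟨s, (abs_scalar_iff s).mp key, rfl⟩
        · rintro ⟨t, ht, heq⟩
          have hst := smul_cancel hP2 heq
          subst hst
          rw [abs_of_nonneg (by linarith), abs_of_nonneg (by linarith)]; ring
      · rw [rd_neg (fun hc => hX ((col_iff hP2).mp hc))]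
        constructor
        · intro hh; exfalso; linarith
        · rintro ⟨t, ht, rfl⟩; exact (hX ⟨t, rfl⟩).elim
    · -- P1 ≠ 0, P1 and P2 radially related
      have hN1 : 0 < ‖P1‖ := norm_pos_iff.mpr hP1
      obtain ⟨b, hb, hbr⟩ : ∃ b : ℝ, P2 = b • P1 ∧ (b < 0 ∨ 1 < b) := by
        have range : ∀ c : ℝ, P2 = c • P1 → (c < 0 ∨ 1 < c) := by
          intro c hc
          by_contra hcon
          push_neg at hcon
          exact h ⟨c, ⟨hcon.1, hcon.2⟩, hc⟩
        rcases hcol with ⟨a, ha⟩ | ⟨a, ha⟩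
        · have ha0 : a ≠ 0 := by rintro rfl; rw [zero_smul] at ha; exact hP1 ha
          have hb : P2 = a⁻¹ • P1 := by
            rw [ha, smul_smul, inv_mul_cancel₀ ha0, one_smul]
          exact ⟨a⁻¹, hb, range _ hb⟩
        · exact ⟨a, ha, range _ ha⟩
      have hb0 : b ≠ 0 := by rcases hbr with h' | h' <;> intro hc <;> rw [hc] at h' <;> linarith
      subst hb
      have e0 : radialDist P1 (b • P1) = |1 - b| * ‖P1‖ := by
        rw [rd_pos (Or.inr ⟨b, rfl⟩)]
        have := smul_diff_norm 1 b P1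
        rwa [one_smul] at this
      rw [e0]
      by_cases hX : ∃ s : ℝ, X = s • P1
      · obtain ⟨s, rfl⟩ := hX
        have e1 : radialDist (s • P1) P1 = |s - 1| * ‖P1‖ := by
          rw [rd_pos (Or.inl ⟨s, rfl⟩)]
          have := smul_diff_norm s 1 P1
          rwa [one_smul] at this
        have e2 : radialDist (s • P1) (b • P1) = |s - b| * ‖P1‖ := by
          rw [rd_pos (Or.inl ⟨s / b, by rw [smul_smul, div_mul_cancel₀ _ hb0]⟩)]
          exact smul_diff_norm s b P1
        rw [e1, e2]
        have hrhs : (∃ t : ℝ, 1 ≤ t ∧ s • P1 = t • b • P1) ↔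
            (∃ t : ℝ, 1 ≤ t ∧ s = t * b) := by
          constructor
          · rintro ⟨t, ht, heq⟩
            rw [smul_smul] at heq
            exact ⟨t, ht, smul_cancel hP1 heq⟩
          · rintro ⟨t, ht, heq⟩
            exact ⟨t, ht, by rw [smul_smul, heq]⟩
        rw [hrhs]
        constructor
        · intro hh
          have key : |s - 1| = |s - b| + |1 - b| := by
            have := mul_right_cancel₀ hN1.ne' (show |s - 1| * ‖P1‖ = (|s - b| + |1 - b|) * ‖P1‖ by
              rw [add_mul]; exact hh)
            exact this
          rcases hbr with hb1 | hb1
          · have hs : s ≤ b := by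
              rcases abs_cases (s - 1) with ⟨h1, _⟩ | ⟨h1, _⟩ <;>
                rcases abs_cases (s - b) with ⟨h2, h2'⟩ | ⟨h2, h2'⟩ <;>
                rcases abs_cases (1 - b) with ⟨h3, h3'⟩ | ⟨h3, h3'⟩ <;> linarith
            exact ⟨s / b, (le_div_iff_of_neg hb1).mpr (by linarith), (div_mul_cancel₀ _ hb0).symm⟩
          · have hs : b ≤ s := by
              rcases abs_cases (s - 1) with ⟨h1, _⟩ | ⟨h1, _⟩ <;>
                rcases abs_cases (s - b) with ⟨h2, h2'⟩ | ⟨h2, h2'⟩ <;>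
                rcases abs_cases (1 - b) with ⟨h3, h3'⟩ | ⟨h3, h3'⟩ <;> linarith
            exact ⟨s / b, (one_le_div (by linarith)).mpr hs, (div_mul_cancel₀ _ hb0).symm⟩
        · rintro ⟨t, ht, rfl⟩
          rcases hbr with hb1 | hb1
          · have hs : t * b ≤ b := by nlinarith
            rw [abs_of_nonpos (by linarith), abs_of_nonpos (by linarith),
              abs_of_nonneg (by linarith)]
            ring
          · have hs : b ≤ t * b := by nlinarith
            rw [abs_of_nonneg (by linarith), abs_of_nonneg (by linarith),
              abs_of_nonpos (by linarith)]
            ring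
      · -- X not collinear with P1 (nor with P2 = b•P1)
        have hX2 : ¬ ∃ s : ℝ, X = s • (b • P1) := by
          rintro ⟨s, rfl⟩
          exact hX ⟨s * b, by rw [smul_smul]⟩
        have hP2' : (b • P1 : EuclideanSpace ℝ (Fin n)) ≠ 0 := by
          rw [smul_ne_zero_iff]; exact ⟨hb0, hP1⟩
        rw [rd_neg (fun hc => hX ((col_iff hP1).mp hc)),
          rd_neg (fun hc => hX2 ((col_iff hP2').mp hc))]
        rw [norm_smul, Real.norm_eq_abs]
        constructor
        · intro hh
          exfalso
          rcases hbr with hb1 | hb1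
          · rw [abs_of_neg hb1, abs_of_nonneg (by linarith : (0:ℝ) ≤ 1 - b)] at hh
            nlinarith
          · rw [abs_of_pos (by linarith : (0:ℝ) < b),
              abs_of_nonpos (by linarith : (1:ℝ) - b ≤ 0)] at hh
            nlinarith
        · rintro ⟨t, ht, rfl⟩
          exact (hX2 ⟨t, rfl⟩).elim
  · -- P1 and P2 not radially related
    have hP1 : P1 ≠ 0 := by
      rintro rfl
      exact hcol (Or.inl ⟨0, (zero_smul ℝ P2).symm⟩)
    have hN1 : 0 < ‖P1‖ := norm_pos_iff.mpr hP1
    rw [rd_neg hcol]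
    by_cases hX2 : ∃ s : ℝ, X = s • P2
    · obtain ⟨s, rfl⟩ := hX2
      by_cases hs0 : s = 0
      · subst hs0
        rw [zero_smul]
        have e1 : radialDist (0 : EuclideanSpace ℝ (Fin n)) P1 = ‖P1‖ := by
          rw [rd_pos (Or.inl ⟨0, (zero_smul ℝ P1).symm⟩), zero_sub, norm_neg]
        have e2 : radialDist (0 : EuclideanSpace ℝ (Fin n)) P2 = ‖P2‖ := by
          rw [rd_pos (Or.inl ⟨0, (zero_smul ℝ P2).symm⟩), zero_sub, norm_neg]
        rw [e1, e2]
        constructor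
        · intro hh; exfalso; linarith
        · rintro ⟨t, ht, heq⟩
          have ht0 : t ≠ 0 := by linarith
          rcases smul_eq_zero.mp heq.symm with h' | h'
          · exact (ht0 h').elim
          · exact (hP2 h').elim
      · -- s ≠ 0
        have e1 : radialDist (s • P2) P1 = |s| * ‖P2‖ + ‖P1‖ := by
          rw [rd_neg, norm_smul, Real.norm_eq_abs]
          rintro (⟨a, ha⟩ | ⟨a, ha⟩)
          · exact hcol (Or.inr ⟨s⁻¹ * a, by
              rw [← smul_smul, ← ha, smul_smul, inv_mul_cancel₀ hs0, one_smul]⟩)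
          · exact hcol (Or.inl ⟨a * s, by rw [ha, smul_smul]⟩)
        have e2 : radialDist (s • P2) P2 = |s - 1| * ‖P2‖ := by
          rw [rd_pos (Or.inl ⟨s, rfl⟩)]
          have := smul_diff_norm s 1 P2
          rwa [one_smul] at this
        rw [e1, e2]
        constructor
        · intro hh
          have key : |s| = |s - 1| + 1 := by
            have := mul_right_cancel₀ hN2.ne' (show |s| * ‖P2‖ = (|s - 1| + 1) * ‖P2‖ by
              rw [add_mul, one_mul]; linarith)
            exact this
          exact ⟨s, (abs_scalar_iff s).mp key, rfl⟩
        · rintro ⟨t, ht, heq⟩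
          have hst := smul_cancel hP2 heq
          subst hst
          rw [abs_of_nonneg (by linarith), abs_of_nonneg (by linarith)]; ring
    · by_cases hX1 : ∃ s : ℝ, X = s • P1
      · obtain ⟨s, rfl⟩ := hX1
        have hs0 : s ≠ 0 := by
          rintro rfl
          exact hX2 ⟨0, by rw [zero_smul, zero_smul]⟩
        have e1 : radialDist (s • P1) P1 = |s - 1| * ‖P1‖ := by
          rw [rd_pos (Or.inl ⟨s, rfl⟩)]
          have := smul_diff_norm s 1 P1
          rwa [one_smul] at this
        have e2 : radialDist (s • P1) P2 = |s| * ‖P1‖ + ‖P2‖ := by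
          rw [rd_neg, norm_smul, Real.norm_eq_abs]
          rintro (⟨a, ha⟩ | ⟨a, ha⟩)
          · exact hcol (Or.inl ⟨s⁻¹ * a, by
              rw [← smul_smul, ← ha, smul_smul, inv_mul_cancel₀ hs0, one_smul]⟩)
          · exact hcol (Or.inr ⟨a * s, by rw [ha, smul_smul]⟩)
        rw [e1, e2]
        constructor
        · intro hh
          exfalso
          have habs : |s - 1| ≤ |s| + 1 := by
            rcases abs_cases s with ⟨h1, _⟩ | ⟨h1, _⟩ <;>
              rcases abs_cases (s - 1) with ⟨h2, _⟩ | ⟨h2, _⟩ <;> linarith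
          nlinarith
        · rintro ⟨t, ht, heq⟩
          exfalso
          exact hX2 ⟨t, heq⟩
      · rw [rd_neg (fun hc => hX1 ((col_iff hP1).mp hc)),
          rd_neg (fun hc => hX2 ((col_iff hP2).mp hc))]
        constructor
        · intro hh; exfalso; linarith
        · rintro ⟨t, ht, rfl⟩; exact (hX2 ⟨t, rfl⟩).elim
end

section
/- Let d be a metric on ℝⁿ such that for all P1, P2 ∈ ℝⁿ, C_d(P1,P2) = Crad(P1,P2). Then for any three distinct points A, B, C ∈ ℝⁿ there exists O ∈ ℝⁿ with O ∈ [A,B] ∩ [B,C] ∩ [A,C] (where [X,Y] = {Z : d(X,Z) + d(Z,Y) = d(X,Y)}), and consequently d satisfies the four-point condition: for all A, B, C, D ∈ ℝⁿ, d(A,B) + d(C,D) ≤ max(d(A,C) + d(B,D), d(A,D) + d(B,C)). -/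
open Classical in
/-- The candidate set `Crad(P1,P2)` for the radial metric. -/
noncomputable def Crad {n : ℕ} (P1 P2 : EuclideanSpace ℝ (Fin n)) :
    Set (EuclideanSpace ℝ (Fin n)) :=
  if P1 = P2 then Set.univ
  else if h : ∃ s : ℝ, s ∈ Set.Ico (0 : ℝ) 1 ∧ P2 = s • P1 then
    Set.univ \ {X | ∃ t : ℝ, Classical.choose h < t ∧ X = t • P1}
  else {X | ∃ t : ℝ, 1 ≤ t ∧ X = t • P2}

section Helpers

variable {n : ℕ} {d : EuclideanSpace ℝ (Fin n) → EuclideanSpace ℝ (Fin n) → ℝ}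

lemma d_self (hd_eq : ∀ x y, d x y = 0 ↔ x = y) (x : EuclideanSpace ℝ (Fin n)) :
    d x x = 0 := (hd_eq x x).mpr rfl

lemma d_nonneg (hd_eq : ∀ x y, d x y = 0 ↔ x = y) (hd_symm : ∀ x y, d x y = d y x)
    (hd_tri : ∀ x y z, d x z ≤ d x y + d y z) (x y : EuclideanSpace ℝ (Fin n)) :
    0 ≤ d x y := by
  have h := hd_tri x y x
  rw [d_self hd_eq, hd_symm y x] at h
  linarith

lemma rel_symm {A B : EuclideanSpace ℝ (Fin n)} (h : ∃ t : ℝ, 0 < t ∧ B = t • A) :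
    ∃ t : ℝ, 0 < t ∧ A = t • B := by
  obtain ⟨t, ht, rfl⟩ := h
  exact ⟨t⁻¹, inv_pos.mpr ht, by rw [smul_smul, inv_mul_cancel₀ ht.ne', one_smul]⟩

lemma rel_trans {A B C : EuclideanSpace ℝ (Fin n)}
    (h1 : ∃ t : ℝ, 0 < t ∧ B = t • A) (h2 : ∃ t : ℝ, 0 < t ∧ C = t • B) :
    ∃ t : ℝ, 0 < t ∧ C = t • A := by
  obtain ⟨t, ht, rfl⟩ := h1; obtain ⟨u, hu, rfl⟩ := h2
  exact ⟨u * t, mul_pos hu ht, smul_smul u t A⟩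

lemma segswap (hd_symm : ∀ x y, d x y = d y x) {A B O : EuclideanSpace ℝ (Fin n)}
    (h : O ∈ seg d A B) : O ∈ seg d B A := by
  have h' : d A O + d O B = d A B := h
  show d B O + d O A = d B A
  rw [hd_symm B O, hd_symm O A, hd_symm B A]; linarith

lemma sum_formula (hd_eq : ∀ x y, d x y = 0 ↔ x = y) (hd_symm : ∀ x y, d x y = d y x)
    (hC : ∀ P1 P2, Cd d P1 P2 = Crad P1 P2)
    (A B : EuclideanSpace ℝ (Fin n)) (h : ¬ ∃ t : ℝ, 0 < t ∧ B = t • A) :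
    d A B = d 0 A + d 0 B := by
  by_cases hA : A = (0 : EuclideanSpace ℝ (Fin n))
  · subst hA
    rw [d_self hd_eq, zero_add]
  · have hex : ∃ s : ℝ, s ∈ Set.Ico (0:ℝ) 1 ∧ (0 : EuclideanSpace ℝ (Fin n)) = s • A :=
      ⟨0, ⟨le_refl 0, zero_lt_one⟩, (zero_smul ℝ A).symm⟩
    have hmem : B ∈ Cd d A 0 := by
      rw [hC A 0]
      unfold Crad
      rw [if_neg hA, dif_pos hex]
      refine ⟨Set.mem_univ _, ?_⟩
      rintro ⟨t, ht, rfl⟩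
      have hsp := (Classical.choose_spec hex).2
      have h0 : Classical.choose hex = 0 := by
        rcases smul_eq_zero.mp hsp.symm with h' | h'
        · exact h'
        · exact absurd h' hA
      rw [h0] at ht
      exact h ⟨t, ht, rfl⟩
    have hm : d B A = d B 0 + d A 0 := hmem
    rw [hd_symm A B, hm, hd_symm B 0, hd_symm A 0]
    ring

lemma ray_formula (hC : ∀ P1 P2, Cd d P1 P2 = Crad P1 P2)
    (A : EuclideanSpace ℝ (Fin n)) (s : ℝ) (hA : A ≠ 0) (hs0 : 0 ≤ s) (hs1 : s < 1) :
    d 0 A = d 0 (s • A) + d A (s • A) := by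
  have hne : A ≠ s • A := by
    intro hh
    have h1 : (1 - s) • A = 0 := by rw [sub_smul, one_smul, ← hh, sub_self]
    rcases smul_eq_zero.mp h1 with h' | h'
    · have : s = 1 := by linarith [sub_eq_zero.mp h']
      exact absurd this hs1.ne
    · exact hA h'
  have hex : ∃ s' : ℝ, s' ∈ Set.Ico (0:ℝ) 1 ∧ s • A = s' • A := ⟨s, ⟨hs0, hs1⟩, rfl⟩
  have hmem : (0 : EuclideanSpace ℝ (Fin n)) ∈ Cd d A (s • A) := by
    rw [hC A (s • A)]
    unfold Crad
    rw [if_neg hne, dif_pos hex]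
    refine ⟨Set.mem_univ _, ?_⟩
    rintro ⟨t, ht, h0⟩
    have hsp := (Classical.choose_spec hex).2
    have hcs : Classical.choose hex = s := by
      have h1 : (s - Classical.choose hex) • A = 0 := by
        rw [sub_smul, ← hsp, sub_self]
      rcases smul_eq_zero.mp h1 with h' | h'
      · linarith [sub_eq_zero.mp h']
      · exact absurd h' hA
    rw [hcs] at ht
    have ht0 : (0:ℝ) < t := lt_of_le_of_lt hs0 ht
    rcases smul_eq_zero.mp h0.symm with h' | h'
    · exact ht0.ne' h'
    · exact hA h'
  exact hmem

lemma rel_formula (hd_eq : ∀ x y, d x y = 0 ↔ x = y) (hd_symm : ∀ x y, d x y = d y x)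
    (hd_tri : ∀ x y z, d x z ≤ d x y + d y z)
    (hC : ∀ P1 P2, Cd d P1 P2 = Crad P1 P2)
    (A B : EuclideanSpace ℝ (Fin n)) (h : ∃ t : ℝ, 0 < t ∧ B = t • A) :
    d A B = |d 0 A - d 0 B| := by
  obtain ⟨t, ht, rfl⟩ := h
  by_cases hA : A = (0 : EuclideanSpace ℝ (Fin n))
  · subst hA
    rw [smul_zero, d_self hd_eq, sub_self, abs_zero]
  rcases lt_trichotomy t 1 with h1 | h1 | h1
  · have hr := ray_formula hC A t hA ht.le h1
    have habs : |d 0 A - d 0 (t • A)| = d 0 A - d 0 (t • A) :=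
      abs_of_nonneg (by linarith [d_nonneg hd_eq hd_symm hd_tri A (t • A)])
    rw [habs]; linarith
  · subst h1
    rw [one_smul, d_self hd_eq, sub_self, abs_zero]
  · have hB : t • A ≠ 0 := smul_ne_zero ht.ne' hA
    have hti : t⁻¹ < 1 := by
      have := mul_lt_mul_of_pos_right h1 (inv_pos.mpr ht)
      rwa [one_mul, mul_inv_cancel₀ ht.ne'] at this
    have hr := ray_formula hC (t • A) t⁻¹ hB (inv_pos.mpr ht).le hti
    rw [smul_smul, inv_mul_cancel₀ ht.ne', one_smul] at hr
    have habs : |d 0 A - d 0 (t • A)| = -(d 0 A - d 0 (t • A)) :=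
      abs_of_nonpos (by linarith [d_nonneg hd_eq hd_symm hd_tri (t • A) A])
    rw [habs, hd_symm A (t • A)]; linarith

end Helpers

open Classical in
noncomputable def pGr {n : ℕ} (d : EuclideanSpace ℝ (Fin n) → EuclideanSpace ℝ (Fin n) → ℝ)
    (X Y : EuclideanSpace ℝ (Fin n)) : ℝ :=
  if (X = 0 ∨ Y = 0 ∨ ∃ t : ℝ, 0 < t ∧ Y = t • X) then min (d 0 X) (d 0 Y) else 0

section PG

variable {n : ℕ} {d : EuclideanSpace ℝ (Fin n) → EuclideanSpace ℝ (Fin n) → ℝ}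

lemma pGr_symm (X Y : EuclideanSpace ℝ (Fin n)) : pGr d X Y = pGr d Y X := by
  unfold pGr
  by_cases h : X = 0 ∨ Y = 0 ∨ ∃ t : ℝ, 0 < t ∧ Y = t • X
  · have h' : Y = 0 ∨ X = 0 ∨ ∃ t : ℝ, 0 < t ∧ X = t • Y := by
      rcases h with h | h | h
      · exact Or.inr (Or.inl h)
      · exact Or.inl h
      · exact Or.inr (Or.inr (rel_symm h))
    rw [if_pos h, if_pos h', min_comm]
  · have h' : ¬ (Y = 0 ∨ X = 0 ∨ ∃ t : ℝ, 0 < t ∧ X = t • Y) := by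
      intro hh
      apply h
      rcases hh with hh | hh | hh
      · exact Or.inr (Or.inl hh)
      · exact Or.inl hh
      · exact Or.inr (Or.inr (rel_symm hh))
    rw [if_neg h, if_neg h']

lemma pGr_nonneg (hd_eq : ∀ x y, d x y = 0 ↔ x = y) (hd_symm : ∀ x y, d x y = d y x)
    (hd_tri : ∀ x y z, d x z ≤ d x y + d y z) (X Y : EuclideanSpace ℝ (Fin n)) :
    0 ≤ pGr d X Y := by
  unfold pGr
  split_ifs
  · exact le_min (d_nonneg hd_eq hd_symm hd_tri 0 X) (d_nonneg hd_eq hd_symm hd_tri 0 Y)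
  · exact le_refl 0

lemma pGr_formula (hd_eq : ∀ x y, d x y = 0 ↔ x = y) (hd_symm : ∀ x y, d x y = d y x)
    (hd_tri : ∀ x y z, d x z ≤ d x y + d y z)
    (hC : ∀ P1 P2, Cd d P1 P2 = Crad P1 P2) (X Y : EuclideanSpace ℝ (Fin n)) :
    d X Y = d 0 X + d 0 Y - 2 * pGr d X Y := by
  unfold pGr
  by_cases h : X = 0 ∨ Y = 0 ∨ ∃ t : ℝ, 0 < t ∧ Y = t • X
  · rw [if_pos h]
    rcases h with h | h | h
    · subst h
      rw [d_self hd_eq, min_eq_left (d_nonneg hd_eq hd_symm hd_tri 0 Y)]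
      ring
    · subst h
      rw [hd_symm X 0, d_self hd_eq, min_eq_right (d_nonneg hd_eq hd_symm hd_tri 0 X)]
      ring
    · rw [rel_formula hd_eq hd_symm hd_tri hC X Y h]
      rcases le_total (d 0 X) (d 0 Y) with hle | hle
      · rw [abs_of_nonpos (by linarith), min_eq_left hle]; ring
      · rw [abs_of_nonneg (by linarith), min_eq_right hle]; ring
  · rw [if_neg h]
    have h3 : ¬ ∃ t : ℝ, 0 < t ∧ Y = t • X := fun hh => h (Or.inr (Or.inr hh))
    rw [sum_formula hd_eq hd_symm hC X Y h3]; ring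

lemma pGr_hyp (hd_eq : ∀ x y, d x y = 0 ↔ x = y) (hd_symm : ∀ x y, d x y = d y x)
    (hd_tri : ∀ x y z, d x z ≤ d x y + d y z)
    (x y z : EuclideanSpace ℝ (Fin n)) :
    min (pGr d x z) (pGr d z y) ≤ pGr d x y := by
  by_cases hxz : x = 0 ∨ z = 0 ∨ ∃ t : ℝ, 0 < t ∧ z = t • x
  · by_cases hzy : z = 0 ∨ y = 0 ∨ ∃ t : ℝ, 0 < t ∧ y = t • z
    · by_cases hz : z = (0 : EuclideanSpace ℝ (Fin n))
      · subst hz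
        have hz0 : pGr d x 0 = 0 := by
          unfold pGr
          rw [if_pos (Or.inr (Or.inl rfl)), d_self hd_eq,
            min_eq_right (d_nonneg hd_eq hd_symm hd_tri 0 x)]
        calc min (pGr d x 0) (pGr d 0 y) ≤ pGr d x 0 := min_le_left _ _
          _ = 0 := hz0
          _ ≤ pGr d x y := pGr_nonneg hd_eq hd_symm hd_tri x y
      · have hxy : x = 0 ∨ y = 0 ∨ ∃ t : ℝ, 0 < t ∧ y = t • x := by
          rcases hxz with h | h | h
          · exact Or.inl h
          · exact absurd h hz
          · rcases hzy with h' | h' | h'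
            · exact absurd h' hz
            · exact Or.inr (Or.inl h')
            · exact Or.inr (Or.inr (rel_trans h h'))
        unfold pGr
        rw [if_pos hxz, if_pos hzy, if_pos hxy]
        refine le_min (le_trans (min_le_left _ _) (min_le_left _ _))
          (le_trans (min_le_right _ _) (min_le_right _ _))
    · have h0 : pGr d z y = 0 := by unfold pGr; rw [if_neg hzy]
      calc min (pGr d x z) (pGr d z y) ≤ pGr d z y := min_le_right _ _
        _ = 0 := h0
        _ ≤ pGr d x y := pGr_nonneg hd_eq hd_symm hd_tri x y
  · have h0 : pGr d x z = 0 := by unfold pGr; rw [if_neg hxz]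
    calc min (pGr d x z) (pGr d z y) ≤ pGr d x z := min_le_left _ _
      _ = 0 := h0
      _ ≤ pGr d x y := pGr_nonneg hd_eq hd_symm hd_tri x y

end PG

lemma gromov4 {α : Type*} (p : α → α → ℝ) (hsym : ∀ x y, p x y = p y x)
    (h : ∀ x y z, min (p x z) (p z y) ≤ p x y) (a b c e : α) :
    min (p a c + p b e) (p a e + p b c) ≤ p a b + p c e := by
  rcases le_total (p a c) (p b e) with h1 | h1 <;>
    rcases le_total (p a e) (p b c) with h2 | h2
  · rcases le_total (p b e) (p b c) with h3 | h3
    · -- p b c maximal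
      have e1 : min (p a c) (p c b) = p a c :=
        min_eq_left (by rw [hsym c b]; exact le_trans h1 h3)
      have e2 : min (p c b) (p b e) = p b e :=
        min_eq_right (by rw [hsym c b]; exact h3)
      have hs : p a c + p b e ≤ p a b + p c e := by
        have i1 := h a b c; have i2 := h c e b
        rw [e1] at i1; rw [e2] at i2; linarith
      exact le_trans (min_le_left _ _) hs
    · -- p b e maximal
      have e1 : min (p a e) (p e b) = p a e :=
        min_eq_left (by rw [hsym e b]; exact le_trans h2 h3)
      have e2 : min (p c b) (p b e) = p c b :=
        min_eq_left (by rw [hsym c b]; exact h3)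
      have hs : p a e + p b c ≤ p a b + p c e := by
        have i1 := h a b e; have i2 := h c e b
        rw [e1] at i1; rw [e2] at i2; rw [hsym c b] at i2; linarith
      exact le_trans (min_le_right _ _) hs
  · rcases le_total (p b e) (p a e) with h3 | h3
    · -- p a e maximal
      have e1 : min (p a e) (p e b) = p e b :=
        min_eq_right (by rw [hsym e b]; exact h3)
      have e2 : min (p c a) (p a e) = p c a :=
        min_eq_left (by rw [hsym c a]; exact le_trans h1 h3)
      have hs : p a c + p b e ≤ p a b + p c e := by
        have i1 := h a b e; have i2 := h c e a
        rw [e1] at i1; rw [e2] at i2; rw [hsym e b] at i1; rw [hsym c a] at i2; linarith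
      exact le_trans (min_le_left _ _) hs
    · -- p b e maximal
      have e1 : min (p a e) (p e b) = p a e :=
        min_eq_left (by rw [hsym e b]; exact h3)
      have e2 : min (p c b) (p b e) = p c b :=
        min_eq_left (by rw [hsym c b]; exact le_trans h2 h3)
      have hs : p a e + p b c ≤ p a b + p c e := by
        have i1 := h a b e; have i2 := h c e b
        rw [e1] at i1; rw [e2] at i2; rw [hsym c b] at i2; linarith
      exact le_trans (min_le_right _ _) hs
  · rcases le_total (p a c) (p b c) with h3 | h3
    · -- p b c maximal
      have e1 : min (p a c) (p c b) = p a c :=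
        min_eq_left (by rw [hsym c b]; exact h3)
      have e2 : min (p c b) (p b e) = p b e :=
        min_eq_right (by rw [hsym c b]; exact le_trans h1 h3)
      have hs : p a c + p b e ≤ p a b + p c e := by
        have i1 := h a b c; have i2 := h c e b
        rw [e1] at i1; rw [e2] at i2; linarith
      exact le_trans (min_le_left _ _) hs
    · -- p a c maximal
      have e1 : min (p a c) (p c b) = p c b :=
        min_eq_right (by rw [hsym c b]; exact h3)
      have e2 : min (p c a) (p a e) = p a e :=
        min_eq_right (by rw [hsym c a]; exact le_trans h2 h3)
      have hs : p a e + p b c ≤ p a b + p c e := by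
        have i1 := h a b c; have i2 := h c e a
        rw [e1] at i1; rw [e2] at i2; rw [hsym c b] at i1; linarith
      exact le_trans (min_le_right _ _) hs
  · rcases le_total (p a c) (p a e) with h3 | h3
    · -- p a e maximal
      have e1 : min (p a e) (p e b) = p e b :=
        min_eq_right (by rw [hsym e b]; exact le_trans h1 h3)
      have e2 : min (p c a) (p a e) = p c a :=
        min_eq_left (by rw [hsym c a]; exact h3)
      have hs : p a c + p b e ≤ p a b + p c e := by
        have i1 := h a b e; have i2 := h c e a
        rw [e1] at i1; rw [e2] at i2; rw [hsym e b] at i1; rw [hsym c a] at i2; linarith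
      exact le_trans (min_le_left _ _) hs
    · -- p a c maximal
      have e1 : min (p a c) (p c b) = p c b :=
        min_eq_right (by rw [hsym c b]; exact le_trans h2 h3)
      have e2 : min (p c a) (p a e) = p a e :=
        min_eq_right (by rw [hsym c a]; exact h3)
      have hs : p a e + p b c ≤ p a b + p c e := by
        have i1 := h a b c; have i2 := h c e a
        rw [e1] at i1; rw [e2] at i2; rw [hsym c b] at i1; linarith
      exact le_trans (min_le_right _ _) hs
section Median

variable {n : ℕ} {d : EuclideanSpace ℝ (Fin n) → EuclideanSpace ℝ (Fin n) → ℝ}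

lemma case3 (hd_eq : ∀ x y, d x y = 0 ↔ x = y) (hd_symm : ∀ x y, d x y = d y x)
    (hd_tri : ∀ x y z, d x z ≤ d x y + d y z)
    (hC : ∀ P1 P2, Cd d P1 P2 = Crad P1 P2)
    (A B C : EuclideanSpace ℝ (Fin n))
    (hrel : ∃ t : ℝ, 0 < t ∧ B = t • A)
    (hAC : ¬ ∃ t : ℝ, 0 < t ∧ C = t • A)
    (hBC : ¬ ∃ t : ℝ, 0 < t ∧ C = t • B) :
    ∃ O, O ∈ seg d A B ∧ O ∈ seg d B C ∧ O ∈ seg d A C := by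
  have hdAB := rel_formula hd_eq hd_symm hd_tri hC A B hrel
  have hsAC := sum_formula hd_eq hd_symm hC A C hAC
  have hsBC := sum_formula hd_eq hd_symm hC B C hBC
  rcases le_total (d 0 A) (d 0 B) with hle | hle
  · refine ⟨A, ?_, ?_, ?_⟩
    · show d A A + d A B = d A B
      rw [d_self hd_eq]; ring
    · show d B A + d A C = d B C
      rw [hd_symm B A, hdAB, hsAC, hsBC, abs_of_nonpos (by linarith)]; ring
    · show d A A + d A C = d A C
      rw [d_self hd_eq]; ring
  · refine ⟨B, ?_, ?_, ?_⟩
    · show d A B + d B B = d A B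
      rw [d_self hd_eq]; ring
    · show d B B + d B C = d B C
      rw [d_self hd_eq]; ring
    · show d A B + d B C = d A C
      rw [hdAB, hsAC, hsBC, abs_of_nonneg (by linarith)]; ring

lemma caseMid (hd_eq : ∀ x y, d x y = 0 ↔ x = y) (hd_symm : ∀ x y, d x y = d y x)
    (hd_tri : ∀ x y z, d x z ≤ d x y + d y z)
    (hC : ∀ P1 P2, Cd d P1 P2 = Crad P1 P2)
    (A B C : EuclideanSpace ℝ (Fin n))
    (h1 : ∃ t : ℝ, 0 < t ∧ B = t • A)
    (h2 : ∃ t : ℝ, 0 < t ∧ C = t • B) :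
    ∃ O, O ∈ seg d A B ∧ O ∈ seg d B C ∧ O ∈ seg d A C := by
  have h3 : ∃ t : ℝ, 0 < t ∧ C = t • A := rel_trans h1 h2
  have dAB := rel_formula hd_eq hd_symm hd_tri hC A B h1
  have dBC := rel_formula hd_eq hd_symm hd_tri hC B C h2
  have dAC := rel_formula hd_eq hd_symm hd_tri hC A C h3
  rcases le_total (d 0 A) (d 0 B) with o1 | o1 <;>
    rcases le_total (d 0 B) (d 0 C) with o2 | o2 <;>
    rcases le_total (d 0 A) (d 0 C) with o3 | o3
  -- 1: A≤B, B≤C, A≤C : mid B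
  · refine ⟨B, ?_, ?_, ?_⟩
    · show d A B + d B B = d A B; rw [d_self hd_eq]; ring
    · show d B B + d B C = d B C; rw [d_self hd_eq]; ring
    · show d A B + d B C = d A C
      rw [dAB, dBC, dAC, abs_of_nonpos (by linarith), abs_of_nonpos (by linarith),
        abs_of_nonpos (by linarith)]; ring
  -- 2: A≤B, B≤C, C≤A (degenerate, all equal) : mid B
  · refine ⟨B, ?_, ?_, ?_⟩
    · show d A B + d B B = d A B; rw [d_self hd_eq]; ring
    · show d B B + d B C = d B C; rw [d_self hd_eq]; ring
    · show d A B + d B C = d A C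
      rw [dAB, dBC, dAC, abs_of_nonpos (by linarith), abs_of_nonpos (by linarith),
        abs_of_nonneg (by linarith)]
      have : d 0 A = d 0 B := by linarith
      have : d 0 B = d 0 C := by linarith
      linarith
  -- 3: A≤B, C≤B, A≤C : mid C
  · refine ⟨C, ?_, ?_, ?_⟩
    · show d A C + d C B = d A B
      rw [hd_symm C B, dAB, dBC, dAC, abs_of_nonpos (by linarith),
        abs_of_nonneg (by linarith), abs_of_nonpos (by linarith)]; ring
    · show d B C + d C C = d B C; rw [d_self hd_eq]; ring
    · show d A C + d C C = d A C; rw [d_self hd_eq]; ring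
  -- 4: A≤B, C≤B, C≤A : mid A
  · refine ⟨A, ?_, ?_, ?_⟩
    · show d A A + d A B = d A B; rw [d_self hd_eq]; ring
    · show d B A + d A C = d B C
      rw [hd_symm B A, dAB, dBC, dAC, abs_of_nonpos (by linarith),
        abs_of_nonneg (by linarith), abs_of_nonneg (by linarith)]; ring
    · show d A A + d A C = d A C; rw [d_self hd_eq]; ring
  -- 5: B≤A, B≤C, A≤C : mid A
  · refine ⟨A, ?_, ?_, ?_⟩
    · show d A A + d A B = d A B; rw [d_self hd_eq]; ring
    · show d B A + d A C = d B C
      rw [hd_symm B A, dAB, dBC, dAC, abs_of_nonneg (by linarith),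
        abs_of_nonpos (by linarith), abs_of_nonpos (by linarith)]; ring
    · show d A A + d A C = d A C; rw [d_self hd_eq]; ring
  -- 6: B≤A, B≤C, C≤A : mid C
  · refine ⟨C, ?_, ?_, ?_⟩
    · show d A C + d C B = d A B
      rw [hd_symm C B, dAB, dBC, dAC, abs_of_nonneg (by linarith),
        abs_of_nonpos (by linarith), abs_of_nonneg (by linarith)]; ring
    · show d B C + d C C = d B C; rw [d_self hd_eq]; ring
    · show d A C + d C C = d A C; rw [d_self hd_eq]; ring
  -- 7: B≤A, C≤B, A≤C (degenerate) : mid B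
  · refine ⟨B, ?_, ?_, ?_⟩
    · show d A B + d B B = d A B; rw [d_self hd_eq]; ring
    · show d B B + d B C = d B C; rw [d_self hd_eq]; ring
    · show d A B + d B C = d A C
      rw [dAB, dBC, dAC, abs_of_nonneg (by linarith), abs_of_nonneg (by linarith),
        abs_of_nonpos (by linarith)]
      have : d 0 B = d 0 A := by linarith
      have : d 0 C = d 0 B := by linarith
      linarith
  -- 8: B≤A, C≤B, C≤A : mid B
  · refine ⟨B, ?_, ?_, ?_⟩
    · show d A B + d B B = d A B; rw [d_self hd_eq]; ring
    · show d B B + d B C = d B C; rw [d_self hd_eq]; ring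
    · show d A B + d B C = d A C
      rw [dAB, dBC, dAC, abs_of_nonneg (by linarith), abs_of_nonneg (by linarith),
        abs_of_nonneg (by linarith)]; ring

end Median

theorem radial_Cd_characterization_implies_tree {n : ℕ}
    (d : EuclideanSpace ℝ (Fin n) → EuclideanSpace ℝ (Fin n) → ℝ)
    (hd_eq : ∀ x y, d x y = 0 ↔ x = y)
    (hd_symm : ∀ x y, d x y = d y x)
    (hd_tri : ∀ x y z, d x z ≤ d x y + d y z)
    (hC : ∀ P1 P2, Cd d P1 P2 = Crad P1 P2) :
    (∀ A B C : EuclideanSpace ℝ (Fin n), A ≠ B → B ≠ C → A ≠ C →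
      ∃ O, O ∈ seg d A B ∩ seg d B C ∩ seg d A C) ∧
    (∀ A B C D : EuclideanSpace ℝ (Fin n),
      d A B + d C D ≤ max (d A C + d B D) (d A D + d B C)) := by
  constructor
  · intro A B C hAB hBC hAC
    by_cases h1 : ∃ t : ℝ, 0 < t ∧ B = t • A
    · by_cases h2 : ∃ t : ℝ, 0 < t ∧ C = t • B
      · obtain ⟨O, m1, m2, m3⟩ := caseMid hd_eq hd_symm hd_tri hC A B C h1 h2
        exact ⟨O, ⟨m1, m2⟩, m3⟩
      · have h3 : ¬ ∃ t : ℝ, 0 < t ∧ C = t • A :=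
          fun hh => h2 (rel_trans (rel_symm h1) hh)
        obtain ⟨O, m1, m2, m3⟩ := case3 hd_eq hd_symm hd_tri hC A B C h1 h3 h2
        exact ⟨O, ⟨m1, m2⟩, m3⟩
    · by_cases h2 : ∃ t : ℝ, 0 < t ∧ C = t • B
      · have h3 : ¬ ∃ t : ℝ, 0 < t ∧ C = t • A :=
          fun hh => h1 (rel_trans hh (rel_symm h2))
        obtain ⟨O, m1, m2, m3⟩ := case3 hd_eq hd_symm hd_tri hC B C A h2
          (fun hh => h1 (rel_symm hh)) (fun hh => h3 (rel_symm hh))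
        exact ⟨O, ⟨segswap hd_symm m3, m1⟩, segswap hd_symm m2⟩
      · by_cases h3 : ∃ t : ℝ, 0 < t ∧ C = t • A
        · obtain ⟨O, m1, m2, m3⟩ := case3 hd_eq hd_symm hd_tri hC A C B h3 h1
            (fun hh => h2 (rel_symm hh))
          exact ⟨O, ⟨m3, segswap hd_symm m2⟩, m1⟩
        · refine ⟨0, ⟨?_, ?_⟩, ?_⟩
          · show d A 0 + d 0 B = d A B
            rw [hd_symm A 0, sum_formula hd_eq hd_symm hC A B h1]
          · show d B 0 + d 0 C = d B C
            rw [hd_symm B 0, sum_formula hd_eq hd_symm hC B C h2]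
          · show d A 0 + d 0 C = d A C
            rw [hd_symm A 0, sum_formula hd_eq hd_symm hC A C h3]
  · intro A B C D
    have fAB := pGr_formula hd_eq hd_symm hd_tri hC A B
    have fCD := pGr_formula hd_eq hd_symm hd_tri hC C D
    have fAC := pGr_formula hd_eq hd_symm hd_tri hC A C
    have fBD := pGr_formula hd_eq hd_symm hd_tri hC B D
    have fAD := pGr_formula hd_eq hd_symm hd_tri hC A D
    have fBC := pGr_formula hd_eq hd_symm hd_tri hC B C
    have hg := gromov4 (pGr d) (fun x y => pGr_symm x y)
      (fun x y z => pGr_hyp hd_eq hd_symm hd_tri x y z) A B C D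
    rcases le_total (pGr d A C + pGr d B D) (pGr d A D + pGr d B C) with hm | hm
    · rw [min_eq_left hm] at hg
      refine le_trans ?_ (le_max_left _ _)
      linarith
    · rw [min_eq_right hm] at hg
      refine le_trans ?_ (le_max_right _ _)
      linarith
end

section
/- Let d2 be the river metric on ℝ² and let P1, P2 ∈ ℝ² with P1₁ ≠ P2₁ and P2₂ = 0. Then C_{d2}(P1,P2) = {(x,y) ∈ ℝ² : (x − P2₁)·(P2₁ − P1₁) ≥ 0}, i.e., the closed half-plane of points whose first coordinate lies at or beyond P2₁ in the direction away from P1₁. -/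
open Classical in
/-- The river metric on ℝ². -/
noncomputable def riverDist (A B : ℝ × ℝ) : ℝ :=
  if A.1 = B.1 then |A.2 - B.2| else |A.2| + |A.1 - B.1| + |B.2|

theorem Cd_river_of_on_river
    (P1 P2 : ℝ × ℝ) (h1 : P1.1 ≠ P2.1) (h2 : P2.2 = 0) :
    Cd riverDist P1 P2 = {X : ℝ × ℝ | (X.1 - P2.1) * (P2.1 - P1.1) ≥ 0} := by
  ext X
  simp only [Cd, Set.mem_setOf_eq, riverDist, h2, h1, if_false, abs_zero, sub_zero, add_zero]
  by_cases hx2 : X.1 = P2.1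
  · have hx1 : X.1 ≠ P1.1 := by rw [hx2]; exact fun h => h1 h.symm
    rw [if_neg hx1, if_pos hx2]
    constructor
    · intro _
      rw [hx2]; simp
    · intro _
      have h3 : |X.1 - P1.1| = |P1.1 - P2.1| := by rw [hx2, abs_sub_comm]
      linarith
  · by_cases hx1 : X.1 = P1.1
    · rw [if_pos hx1, if_neg hx2]
      constructor
      · intro h
        exfalso
        have h4 : |P1.1 - P2.1| > 0 := abs_pos.2 (sub_ne_zero.2 h1)
        have h5 : |X.1 - P2.1| = |P1.1 - P2.1| := by rw [hx1]
        have := abs_sub X.2 P1.2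
        linarith
      · intro h
        exfalso
        have heq : (X.1 - P2.1) * (P2.1 - P1.1) = -((P2.1 - P1.1) * (P2.1 - P1.1)) := by
          rw [hx1]; ring
        have h4 : P2.1 - P1.1 ≠ 0 := sub_ne_zero.2 (fun h => h1 h.symm)
        nlinarith [mul_self_pos.2 h4]
    · rw [if_neg hx1, if_neg hx2]
      constructor
      · intro h
        have key : |X.1 - P1.1| = |X.1 - P2.1| + |P1.1 - P2.1| := by linarith
        rcases abs_cases (X.1 - P1.1) with ⟨e, _⟩ | ⟨e, _⟩ <;>
        rcases abs_cases (X.1 - P2.1) with ⟨e2, _⟩ | ⟨e2, _⟩ <;>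
        rcases abs_cases (P1.1 - P2.1) with ⟨e3, _⟩ | ⟨e3, _⟩ <;>
          nlinarith [key]
      · intro h
        have key : |X.1 - P1.1| = |X.1 - P2.1| + |P1.1 - P2.1| := by
          rcases abs_cases (X.1 - P1.1) with ⟨e, _⟩ | ⟨e, _⟩ <;>
          rcases abs_cases (X.1 - P2.1) with ⟨e2, _⟩ | ⟨e2, _⟩ <;>
          rcases abs_cases (P1.1 - P2.1) with ⟨e3, _⟩ | ⟨e3, _⟩ <;>
            nlinarith [h]
        linarith
end

section
/- Let d be a metric on ℝ² such that for all P1, P2 ∈ ℝ², C_d(P1,P2) = Criv(P1,P2). Then for any three distinct points A, B, C ∈ ℝ² there exists O ∈ ℝ² with O ∈ [A,B] ∩ [B,C] ∩ [A,C] (where [X,Y] = {Z : d(X,Z) + d(Z,Y) = d(X,Y)}), and consequently d satisfies the four-point condition: for all A, B, C, D ∈ ℝ², d(A,B) + d(C,D) ≤ max(d(A,C) + d(B,D), d(A,D) + d(B,C)). -/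
open Classical in
/-- The candidate set `Criv(P1,P2)` for the river metric. -/
noncomputable def Criv (P1 P2 : ℝ × ℝ) : Set (ℝ × ℝ) :=
  if P1 = P2 then Set.univ
  else if h : P1.1 = P2.1 ∧ ∃ s : ℝ, s ∈ Set.Ico (0 : ℝ) 1 ∧ P2.2 = s * P1.2 then
    Set.univ \ {X : ℝ × ℝ | ∃ t : ℝ, Classical.choose h.2 < t ∧ X = (P1.1, t * P1.2)}
  else if P2.2 ≠ 0 then
    {X : ℝ × ℝ | ∃ t : ℝ, 1 ≤ t ∧ X = (P2.1, t * P2.2)}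
  else
    {X : ℝ × ℝ | (X.1 - P2.1) * (P2.1 - P1.1) ≥ 0}

lemma criv_branch2 {P1 P2 : ℝ × ℝ} (hne : P1 ≠ P2)
    (h : P1.1 = P2.1 ∧ ∃ s : ℝ, s ∈ Set.Ico (0:ℝ) 1 ∧ P2.2 = s * P1.2) :
    Criv P1 P2 = Set.univ \ {X : ℝ × ℝ | ∃ t : ℝ, Classical.choose h.2 < t ∧ X = (P1.1, t * P1.2)} := by
  unfold Criv
  rw [if_neg hne, dif_pos h]

lemma criv_branch3 {P1 P2 : ℝ × ℝ} (hne : P1 ≠ P2)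
    (hb : ¬(P1.1 = P2.1 ∧ ∃ s : ℝ, s ∈ Set.Ico (0:ℝ) 1 ∧ P2.2 = s * P1.2))
    (h2 : P2.2 ≠ 0) :
    Criv P1 P2 = {X : ℝ × ℝ | ∃ t : ℝ, 1 ≤ t ∧ X = (P2.1, t * P2.2)} := by
  unfold Criv
  rw [if_neg hne, dif_neg hb, if_pos h2]

lemma criv_branch4 {P1 P2 : ℝ × ℝ} (hne : P1 ≠ P2)
    (hb : ¬(P1.1 = P2.1 ∧ ∃ s : ℝ, s ∈ Set.Ico (0:ℝ) 1 ∧ P2.2 = s * P1.2))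
    (h2 : P2.2 = 0) :
    Criv P1 P2 = {X : ℝ × ℝ | (X.1 - P2.1) * (P2.1 - P1.1) ≥ 0} := by
  unfold Criv
  rw [if_neg hne, dif_neg hb, if_neg (not_not.mpr h2)]

lemma bcond_iff {P1 P2 : ℝ × ℝ} (h2 : P1.2 ≠ 0) :
    (P1.1 = P2.1 ∧ ∃ s : ℝ, s ∈ Set.Ico (0:ℝ) 1 ∧ P2.2 = s * P1.2) ↔
    (P1.1 = P2.1 ∧ 0 ≤ P2.2 * P1.2 ∧ P2.2 * P1.2 < P1.2 ^ 2) := by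
  have hsq : 0 < P1.2 ^ 2 := lt_of_le_of_ne (sq_nonneg _) (Ne.symm (pow_ne_zero 2 h2))
  constructor
  · rintro ⟨h1, s, hs, hseq⟩
    rw [Set.mem_Ico] at hs
    refine ⟨h1, ?_, ?_⟩ <;> rw [hseq] <;> nlinarith [hs.1, hs.2]
  · rintro ⟨h1, hs0, hs1⟩
    have key : P2.2 / P1.2 = P2.2 * P1.2 / P1.2 ^ 2 := by field_simp
    refine ⟨h1, P2.2 / P1.2, Set.mem_Ico.mpr ⟨?_, ?_⟩, ?_⟩
    · rw [key]; exact div_nonneg hs0 hsq.le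
    · rw [key, div_lt_one hsq]; exact hs1
    · field_simp

lemma mem_case2 {P1 P2 Z : ℝ × ℝ} (h1 : P1.1 = P2.1) (h2 : P1.2 ≠ 0)
    (hs : 0 ≤ P2.2 * P1.2) (hlt : P2.2 * P1.2 < P1.2 ^ 2)
    (hZ : Z.1 ≠ P1.1 ∨ Z.2 * P1.2 ≤ P2.2 * P1.2) : Z ∈ Criv P1 P2 := by
  have hsq : 0 < P1.2 ^ 2 := lt_of_le_of_ne (sq_nonneg _) (Ne.symm (pow_ne_zero 2 h2))
  have hne : P1 ≠ P2 := by
    intro h; rw [h] at hlt; nlinarith [sq_nonneg P2.2]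
  have hcond := (bcond_iff h2).2 ⟨h1, hs, hlt⟩
  rw [criv_branch2 hne hcond]
  refine ⟨Set.mem_univ _, ?_⟩
  rintro ⟨t, ht, hzt⟩
  have hz1 : Z.1 = P1.1 := by rw [hzt]
  have hz2 : Z.2 = t * P1.2 := by rw [hzt]
  obtain ⟨hIco, hseq⟩ := Classical.choose_spec hcond.2
  rcases hZ with h | h
  · exact h hz1
  · rw [hz2, hseq] at h
    nlinarith

lemma mem_case3 {P1 P2 Z : ℝ × ℝ} (h2 : P2.2 ≠ 0)
    (hne : P1.1 ≠ P2.1 ∨ P2.2 * P1.2 < 0 ∨ P1.2 ^ 2 ≤ P2.2 * P1.2)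
    (hZ1 : Z.1 = P2.1) (hZ2 : P2.2 ^ 2 ≤ Z.2 * P2.2) : Z ∈ Criv P1 P2 := by
  by_cases hPP : P1 = P2
  · unfold Criv; rw [if_pos hPP]; exact Set.mem_univ Z
  have hb : ¬(P1.1 = P2.1 ∧ ∃ s : ℝ, s ∈ Set.Ico (0:ℝ) 1 ∧ P2.2 = s * P1.2) := by
    rintro ⟨hc, s, hsIco, hseq⟩
    rw [Set.mem_Ico] at hsIco
    by_cases h12 : P1.2 = 0
    · rw [h12, mul_zero] at hseq; exact h2 hseq
    · have hsq : 0 < P1.2 ^ 2 := lt_of_le_of_ne (sq_nonneg _) (Ne.symm (pow_ne_zero 2 h12))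
      rcases hne with h | h | h
      · exact h hc
      · rw [hseq] at h; nlinarith [hsIco.1]
      · rw [hseq] at h; nlinarith [hsIco.2]
  rw [criv_branch3 hPP hb h2]
  have hsq2 : 0 < P2.2 ^ 2 := lt_of_le_of_ne (sq_nonneg _) (Ne.symm (pow_ne_zero 2 h2))
  have key : Z.2 / P2.2 = Z.2 * P2.2 / P2.2 ^ 2 := by field_simp
  refine ⟨Z.2 / P2.2, ?_, ?_⟩
  · rw [key, le_div_iff₀ hsq2, one_mul]; exact hZ2
  · exact Prod.ext_iff.2 ⟨hZ1, by field_simp⟩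

lemma mem_case4 {P1 P2 Z : ℝ × ℝ} (h2 : P2.2 = 0) (h1 : P1.1 ≠ P2.1)
    (hZ : 0 ≤ (Z.1 - P2.1) * (P2.1 - P1.1)) : Z ∈ Criv P1 P2 := by
  have hPP : P1 ≠ P2 := fun h => h1 (by rw [h])
  have hb : ¬(P1.1 = P2.1 ∧ ∃ s : ℝ, s ∈ Set.Ico (0:ℝ) 1 ∧ P2.2 = s * P1.2) :=
    fun h => h1 h.1
  rw [criv_branch4 hPP hb h2]
  exact hZ

lemma criv_decode {C D X : ℝ × ℝ} (hXD : X ≠ D) (hmem : C ∈ Criv D X) :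
    (X.1 = D.1 ∧ D.2 ≠ 0 ∧ 0 ≤ X.2 * D.2 ∧ X.2 * D.2 < D.2 ^ 2 ∧
      (C.1 = D.1 → C.2 * D.2 ≤ X.2 * D.2)) ∨
    (X.2 ≠ 0 ∧ C.1 = X.1 ∧ X.2 ^ 2 ≤ C.2 * X.2 ∧
      ¬(X.1 = D.1 ∧ 0 ≤ X.2 * D.2 ∧ X.2 * D.2 < D.2 ^ 2)) ∨
    (X.2 = 0 ∧ X.1 ≠ D.1 ∧ 0 ≤ (C.1 - X.1) * (X.1 - D.1)) := by
  have hne : D ≠ X := fun h => hXD h.symm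
  by_cases hb : D.1 = X.1 ∧ ∃ s : ℝ, s ∈ Set.Ico (0:ℝ) 1 ∧ X.2 = s * D.2
  · left
    have hD2 : D.2 ≠ 0 := by
      intro h0
      obtain ⟨hc, s, _, hseq⟩ := hb
      exact hXD (Prod.ext_iff.2 ⟨hc.symm, by rw [hseq, h0, mul_zero]⟩)
    have hsq : 0 < D.2 ^ 2 := lt_of_le_of_ne (sq_nonneg _) (Ne.symm (pow_ne_zero 2 hD2))
    have hpoly := (bcond_iff hD2).1 hb
    refine ⟨hpoly.1.symm, hD2, hpoly.2.1, hpoly.2.2, ?_⟩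
    intro hCD
    by_contra hlt
    push_neg at hlt
    rw [criv_branch2 hne hb] at hmem
    obtain ⟨hsIco, hseq⟩ := Classical.choose_spec hb.2
    apply hmem.2
    refine ⟨C.2 / D.2, ?_, Prod.ext_iff.2 ⟨hCD, by field_simp⟩⟩
    have e2 : C.2 / D.2 * D.2 ^ 2 = C.2 * D.2 := by field_simp
    have e3 : X.2 * D.2 = Classical.choose hb.2 * D.2 ^ 2 := by
      linear_combination D.2 * hseq
    nlinarith [hsq, hlt, e2, e3]
  · by_cases hx2 : X.2 = 0
    · right; right
      have hx1 : X.1 ≠ D.1 := by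
        intro h
        exact hb ⟨h.symm, 0, Set.mem_Ico.mpr ⟨le_refl 0, zero_lt_one⟩, by rw [hx2, zero_mul]⟩
      refine ⟨hx2, hx1, ?_⟩
      rw [criv_branch4 hne hb hx2] at hmem
      exact hmem
    · right; left
      rw [criv_branch3 hne hb hx2] at hmem
      obtain ⟨t, ht, hteq⟩ := hmem
      have hsqx : 0 < X.2 ^ 2 := lt_of_le_of_ne (sq_nonneg _) (Ne.symm (pow_ne_zero 2 hx2))
      have hc1 : C.1 = X.1 := by rw [hteq]
      have hc2 : C.2 = t * X.2 := by rw [hteq]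
      refine ⟨hx2, hc1, by rw [hc2]; nlinarith, ?_⟩
      rintro ⟨h1', h2', h3'⟩
      apply hb
      have hD2 : D.2 ≠ 0 := by
        intro h0; rw [h0] at h3'; norm_num at h3'
      exact (bcond_iff hD2).2 ⟨h1'.symm, h2', h3'⟩

lemma mid_criv {A B C : ℝ × ℝ} (hAB1 : A.1 = B.1) (hBC1 : B.1 = C.1) (hBC : B ≠ C)
    (h1 : A.2 ≤ B.2) (h2 : B.2 ≤ C.2) : A ∈ Criv C B := by
  have hBC2 : B.2 ≠ C.2 := fun h => hBC (Prod.ext_iff.2 ⟨hBC1, h⟩)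
  rcases lt_trichotomy C.2 0 with hc | hc | hc
  · have hb2 : B.2 < C.2 := lt_of_le_of_ne h2 hBC2
    exact mem_case3 (by intro h; rw [h] at hb2; linarith)
      (Or.inr (Or.inr (by nlinarith))) hAB1 (by nlinarith)
  · have hb2 : B.2 < 0 := lt_of_le_of_ne (by linarith) (fun h => hBC2 (by rw [h, hc]))
    exact mem_case3 (ne_of_lt hb2)
      (Or.inr (Or.inr (by rw [hc]; nlinarith))) hAB1 (by nlinarith)
  · by_cases hb0 : 0 ≤ B.2
    · have hb2 : B.2 < C.2 := lt_of_le_of_ne h2 hBC2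
      exact mem_case2 hBC1.symm (ne_of_gt hc) (mul_nonneg hb0 hc.le)
        (by nlinarith) (Or.inr (by nlinarith))
    · push_neg at hb0
      exact mem_case3 (ne_of_lt hb0)
        (Or.inr (Or.inl (mul_neg_of_neg_of_pos hb0 hc))) hAB1 (by nlinarith)

lemma pair_criv {A B C : ℝ × ℝ} (h1 : A.1 = B.1) (hprod : 0 < A.2 * B.2)
    (hle : A.2 ^ 2 ≤ A.2 * B.2) (hC1 : C.1 ≠ A.1) : B ∈ Criv C A := by
  have ha : A.2 ≠ 0 := by intro h; rw [h, zero_mul] at hprod; exact lt_irrefl 0 hprod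
  exact mem_case3 ha (Or.inl hC1) h1.symm (by rw [mul_comm]; exact hle)

lemma riv_criv {A B : ℝ × ℝ} (m : ℝ) (hm : 0 ≤ (A.1 - m) * (m - B.1))
    (hcol : A.1 = B.1 → A.2 * B.2 ≤ 0) : A ∈ Criv B ((m : ℝ), (0 : ℝ)) := by
  by_cases hBm : B.1 = m
  · by_cases hB2 : B.2 = 0
    · have hBeq : B = ((m : ℝ), (0 : ℝ)) := Prod.ext_iff.2 ⟨hBm, hB2⟩
      unfold Criv; rw [if_pos hBeq]; exact Set.mem_univ _
    · have hsq : 0 < B.2 ^ 2 := lt_of_le_of_ne (sq_nonneg _) (Ne.symm (pow_ne_zero 2 hB2))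
      refine mem_case2 (P1 := B) (P2 := ((m : ℝ), (0 : ℝ))) hBm hB2 (by norm_num)
        (by norm_num; exact hsq) ?_
      by_cases hA1 : A.1 = B.1
      · exact Or.inr (by norm_num; exact hcol hA1)
      · exact Or.inl hA1
  · exact mem_case4 (P1 := B) (P2 := ((m : ℝ), (0 : ℝ))) rfl hBm hm

lemma median_exists (a b c : ℝ) :
    ∃ m, 0 ≤ (a - m) * (m - b) ∧ 0 ≤ (b - m) * (m - c) ∧ 0 ≤ (a - m) * (m - c) := by
  rcases le_total a b with h1 | h1 <;> rcases le_total b c with h2 | h2 <;>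
    rcases le_total a c with h3 | h3
  all_goals first
    | exact ⟨b, by nlinarith, by nlinarith, by nlinarith⟩
    | exact ⟨a, by nlinarith, by nlinarith, by nlinarith⟩
    | exact ⟨c, by nlinarith, by nlinarith, by nlinarith⟩

lemma line_med {c e x y : ℝ} (hx : 0 ≤ (c - x) * (x - e)) (hy : 0 ≤ (c - y) * (y - e)) :
    0 ≤ (c - x) * (x - y) ∨ 0 ≤ (c - y) * (y - x) := by
  rcases le_total c e with h | h <;> rcases le_total x y with h2 | h2
  · left; have hcx : c ≤ x := by nlinarith
    nlinarith
  · right; have hcy : c ≤ y := by nlinarith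
    nlinarith
  · right; have hcy : y ≤ c := by nlinarith
    nlinarith
  · left; have hcx : x ≤ c := by nlinarith
    nlinarith

section SegLemmas

variable {d : ℝ × ℝ → ℝ × ℝ → ℝ}

lemma mem_seg_iff (hd_symm : ∀ x y, d x y = d y x)
    (hC : ∀ P1 P2, Cd d P1 P2 = Criv P1 P2) (P Q X : ℝ × ℝ) :
    X ∈ seg d P Q ↔ P ∈ Criv Q X := by
  rw [← hC Q X]
  simp only [Cd, seg, Set.mem_setOf_eq]
  constructor <;> intro h <;>
    linarith [hd_symm P X, hd_symm X Q, hd_symm P Q]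

lemma left_mem_seg (hd_eq : ∀ x y, d x y = 0 ↔ x = y) (A B : ℝ × ℝ) : A ∈ seg d A B := by
  simp only [seg, Set.mem_setOf_eq, (hd_eq A A).2 rfl, zero_add]

lemma right_mem_seg (hd_eq : ∀ x y, d x y = 0 ↔ x = y) (A B : ℝ × ℝ) : B ∈ seg d A B := by
  simp only [seg, Set.mem_setOf_eq, (hd_eq B B).2 rfl, add_zero]

lemma seg_comm (hd_symm : ∀ x y, d x y = d y x) (A B : ℝ × ℝ) :
    seg d A B = seg d B A :=
  Set.ext fun X => by
    simp only [seg, Set.mem_setOf_eq]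
    constructor <;> intro h <;>
      linarith [hd_symm A X, hd_symm X B, hd_symm A B]

theorem tripod (hd_eq : ∀ x y, d x y = 0 ↔ x = y) (hd_symm : ∀ x y, d x y = d y x)
    (hC : ∀ P1 P2, Cd d P1 P2 = Criv P1 P2) :
    ∀ A B C : ℝ × ℝ, A ≠ B → B ≠ C → A ≠ C →
      ∃ O, O ∈ seg d A B ∩ seg d B C ∩ seg d A C := by
  intro A B C hAB hBC hAC
  have msi := mem_seg_iff hd_symm hC
  have lm := left_mem_seg (d := d) hd_eq
  have rm := right_mem_seg (d := d) hd_eq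
  have sc := seg_comm (d := d) hd_symm
  by_cases hcol : A.1 = B.1 ∧ B.1 = C.1
  · obtain ⟨hc1, hc2⟩ := hcol
    rcases le_total A.2 B.2 with h1 | h1 <;> rcases le_total B.2 C.2 with h2 | h2
    · exact ⟨B, ⟨rm A B, lm B C⟩, (msi A C B).2 (mid_criv hc1 hc2 hBC h1 h2)⟩
    · rcases le_total A.2 C.2 with h3 | h3
      · exact ⟨C, ⟨(msi A B C).2 (mid_criv (hc1.trans hc2) hc2.symm (Ne.symm hBC) h3 h2),
          rm B C⟩, rm A C⟩
      · refine ⟨A, ⟨lm A B, ?_⟩, lm A C⟩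
        rw [sc B C]
        exact (msi C B A).2 (mid_criv (hc1.trans hc2).symm hc1 hAB h3 h1)
    · rcases le_total A.2 C.2 with h3 | h3
      · exact ⟨A, ⟨lm A B, (msi B C A).2 (mid_criv hc1.symm (hc1.trans hc2) hAC h1 h3)⟩, lm A C⟩
      · refine ⟨C, ⟨?_, rm B C⟩, rm A C⟩
        rw [sc A B]
        exact (msi B A C).2 (mid_criv hc2 (hc1.trans hc2).symm (Ne.symm hAC) h2 h3)
    · refine ⟨B, ⟨rm A B, lm B C⟩, ?_⟩
      rw [sc A C]
      exact (msi C A B).2 (mid_criv hc2.symm hc1.symm (Ne.symm hAB) h2 h1)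
  · by_cases pAB : A.1 = B.1 ∧ 0 < A.2 * B.2
    · obtain ⟨pab1, pab2⟩ := pAB
      have hCA : C.1 ≠ A.1 := fun h => hcol ⟨pab1, pab1.symm.trans h.symm⟩
      have hCB : C.1 ≠ B.1 := fun h => hCA (h.trans pab1.symm)
      have ha : A.2 ≠ 0 := by intro h; rw [h, zero_mul] at pab2; exact lt_irrefl 0 pab2
      have ha2 : 0 < A.2 ^ 2 := lt_of_le_of_ne (sq_nonneg _) (Ne.symm (pow_ne_zero 2 ha))
      rcases le_total (A.2 ^ 2) (A.2 * B.2) with hle | hle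
      · exact ⟨A, ⟨lm A B, (msi B C A).2 (pair_criv pab1 pab2 hle hCA)⟩, lm A C⟩
      · have hprod' : 0 < B.2 * A.2 := by
          linarith [pab2, (mul_comm A.2 B.2 : A.2 * B.2 = B.2 * A.2)]
        have hle' : B.2 ^ 2 ≤ B.2 * A.2 := by
          nlinarith [mul_nonneg (sub_nonneg.2 hle) pab2.le]
        exact ⟨B, ⟨rm A B, lm B C⟩, (msi A C B).2 (pair_criv pab1.symm hprod' hle' hCB)⟩
    · by_cases pBC : B.1 = C.1 ∧ 0 < B.2 * C.2
      · obtain ⟨pbc1, pbc2⟩ := pBC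
        have hAB1 : A.1 ≠ B.1 := fun h => hcol ⟨h, pbc1⟩
        have hAC1 : A.1 ≠ C.1 := fun h => hAB1 (h.trans pbc1.symm)
        have hb : B.2 ≠ 0 := by intro h; rw [h, zero_mul] at pbc2; exact lt_irrefl 0 pbc2
        have hb2 : 0 < B.2 ^ 2 := lt_of_le_of_ne (sq_nonneg _) (Ne.symm (pow_ne_zero 2 hb))
        rcases le_total (B.2 ^ 2) (B.2 * C.2) with hle | hle
        · refine ⟨B, ⟨rm A B, lm B C⟩, ?_⟩
          rw [sc A C]
          exact (msi C A B).2 (pair_criv pbc1 pbc2 hle hAB1)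
        · have hprod' : 0 < C.2 * B.2 := by
            linarith [pbc2, (mul_comm B.2 C.2 : B.2 * C.2 = C.2 * B.2)]
          have hle' : C.2 ^ 2 ≤ C.2 * B.2 := by
            nlinarith [mul_nonneg (sub_nonneg.2 hle) pbc2.le]
          refine ⟨C, ⟨?_, rm B C⟩, rm A C⟩
          rw [sc A B]
          exact (msi B A C).2 (pair_criv pbc1.symm hprod' hle' hAC1)
      · by_cases pAC : A.1 = C.1 ∧ 0 < A.2 * C.2
        · obtain ⟨pac1, pac2⟩ := pAC
          have hBA : B.1 ≠ A.1 := fun h => hcol ⟨h.symm, h.trans pac1⟩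
          have hBC1 : B.1 ≠ C.1 := fun h => hBA (h.trans pac1.symm)
          have ha : A.2 ≠ 0 := by intro h; rw [h, zero_mul] at pac2; exact lt_irrefl 0 pac2
          have ha2 : 0 < A.2 ^ 2 := lt_of_le_of_ne (sq_nonneg _) (Ne.symm (pow_ne_zero 2 ha))
          rcases le_total (A.2 ^ 2) (A.2 * C.2) with hle | hle
          · refine ⟨A, ⟨lm A B, ?_⟩, lm A C⟩
            rw [sc B C]
            exact (msi C B A).2 (pair_criv pac1 pac2 hle hBA)
          · have hprod' : 0 < C.2 * A.2 := by
              linarith [pac2, (mul_comm A.2 C.2 : A.2 * C.2 = C.2 * A.2)]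
            have hle' : C.2 ^ 2 ≤ C.2 * A.2 := by
              nlinarith [mul_nonneg (sub_nonneg.2 hle) pac2.le]
            exact ⟨C, ⟨(msi A B C).2 (pair_criv pac1.symm hprod' hle' hBC1), rm B C⟩, rm A C⟩
        · obtain ⟨m, hm1, hm2, hm3⟩ := median_exists A.1 B.1 C.1
          have cAB : A.1 = B.1 → A.2 * B.2 ≤ 0 := fun h =>
            le_of_not_gt fun hl => pAB ⟨h, hl⟩
          have cBC : B.1 = C.1 → B.2 * C.2 ≤ 0 := fun h =>
            le_of_not_gt fun hl => pBC ⟨h, hl⟩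
          have cAC : A.1 = C.1 → A.2 * C.2 ≤ 0 := fun h =>
            le_of_not_gt fun hl => pAC ⟨h, hl⟩
          exact ⟨((m : ℝ), (0 : ℝ)), ⟨(msi A B _).2 (riv_criv m hm1 cAB),
            (msi B C _).2 (riv_criv m hm2 cBC)⟩, (msi A C _).2 (riv_criv m hm3 cAC)⟩


lemma sq_pos_of_ne' {x : ℝ} (h : x ≠ 0) : 0 < x ^ 2 :=
  lt_of_le_of_ne (sq_nonneg _) (Ne.symm (pow_ne_zero 2 h))

theorem key_comp (hd_eq : ∀ x y, d x y = 0 ↔ x = y) (hd_symm : ∀ x y, d x y = d y x)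
    (hC : ∀ P1 P2, Cd d P1 P2 = Criv P1 P2) (C D X Y : ℝ × ℝ)
    (hX : X ∈ seg d C D) (hY : Y ∈ seg d C D) :
    X ∈ seg d C Y ∨ Y ∈ seg d C X := by
  have msi := mem_seg_iff hd_symm hC
  have lm := left_mem_seg (d := d) hd_eq
  have rm := right_mem_seg (d := d) hd_eq
  by_cases hXY : X = Y
  · subst hXY; left; exact rm C X
  by_cases hXC : X = C
  · subst hXC; left; exact lm X Y
  by_cases hYC : Y = C
  · subst hYC; right; exact lm Y X
  by_cases hXD : X = D
  · right; rw [hXD]; exact hY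
  by_cases hYD : Y = D
  · left; rw [hYD]; exact hX
  have dX := criv_decode hXD ((msi C D X).1 hX)
  have dY := criv_decode hYD ((msi C D Y).1 hY)
  rcases dX with ⟨bx1, bx2, bx3, bx4, bx5⟩ | ⟨cx1, cx2, cx3, cx4⟩ | ⟨dx1, dx2, dx3⟩ <;>
    rcases dY with ⟨hy1, hy2, hy3, hy4, hy5⟩ | ⟨cy1, cy2, cy3, cy4⟩ | ⟨dy1, dy2, dy3⟩
  · -- (b,b) : both on D's column
    have hD2sq : 0 < D.2 ^ 2 := sq_pos_of_ne' bx2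
    have hXYs : 0 ≤ X.2 * Y.2 := by nlinarith [mul_nonneg bx3 hy3]
    rcases lt_trichotomy (X.2 * D.2) (Y.2 * D.2) with hlt | heq | hlt
    · left
      refine (msi C Y X).2 (mem_case2 (hy1.trans bx1.symm) ?_ hXYs ?_ ?_)
      · intro h; rw [h, zero_mul] at hlt; linarith
      · nlinarith [mul_pos (by linarith : (0:ℝ) < Y.2 * D.2 - X.2 * D.2)
          (by linarith : (0:ℝ) < Y.2 * D.2)]
      · by_cases hC1 : C.1 = D.1
        · exact Or.inr (by nlinarith [mul_nonneg (sub_nonneg.2 (bx5 hC1)) hy3])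
        · exact Or.inl (fun h => hC1 (h.trans hy1))
    · exfalso
      exact hXY (Prod.ext_iff.2 ⟨bx1.trans hy1.symm, mul_right_cancel₀ bx2 heq⟩)
    · right
      refine (msi C X Y).2 (mem_case2 (bx1.trans hy1.symm) ?_ (by linarith [hXYs, (mul_comm X.2 Y.2 : X.2 * Y.2 = Y.2 * X.2)]) ?_ ?_)
      · intro h; rw [h, zero_mul] at hlt; linarith
      · nlinarith [mul_pos (by linarith : (0:ℝ) < X.2 * D.2 - Y.2 * D.2)
          (by linarith : (0:ℝ) < X.2 * D.2)]
      · by_cases hC1 : C.1 = D.1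
        · exact Or.inr (by nlinarith [mul_nonneg (sub_nonneg.2 (hy5 hC1)) bx3])
        · exact Or.inl (fun h => hC1 (h.trans bx1))
  · -- (b,c) : X on D's column, Y on C's column
    right
    have hD2sq : 0 < D.2 ^ 2 := sq_pos_of_ne' bx2
    have hne : X.1 ≠ Y.1 ∨ Y.2 * X.2 < 0 ∨ X.2 ^ 2 ≤ Y.2 * X.2 := by
      by_cases hC1 : C.1 = D.1
      · have hYD1 : Y.1 = D.1 := cy2.symm.trans hC1
        have halt : Y.2 * D.2 < 0 ∨ D.2 ^ 2 ≤ Y.2 * D.2 := by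
          by_contra hcon
          push_neg at hcon
          exact cy4 ⟨hYD1, hcon.1, hcon.2⟩
        by_cases hX20 : X.2 = 0
        · exact Or.inr (Or.inr (by rw [hX20]; norm_num))
        · have hxpos : 0 < X.2 * D.2 := lt_of_le_of_ne bx3 (Ne.symm (mul_ne_zero hX20 bx2))
          rcases halt with h | h
          · exact Or.inr (Or.inl (by
              nlinarith [mul_pos hxpos (by linarith : (0:ℝ) < -(Y.2 * D.2))]))
          · exact Or.inr (Or.inr (by
              nlinarith [mul_pos hxpos (by linarith : (0:ℝ) < Y.2 * D.2 - X.2 * D.2)]))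
      · exact Or.inl (fun h => hC1 (cy2.trans (h.symm.trans bx1)))
    exact (msi C X Y).2 (mem_case3 cy1 hne cy2 cy3)
  · -- (b,d)
    right
    exact (msi C X Y).2 (mem_case4 dy1 (fun h => dy2 (h.symm.trans bx1))
      (by rw [bx1]; exact dy3))
  · -- (c,b) : mirror of (b,c)
    left
    have hD2sq : 0 < D.2 ^ 2 := sq_pos_of_ne' hy2
    have hne : Y.1 ≠ X.1 ∨ X.2 * Y.2 < 0 ∨ Y.2 ^ 2 ≤ X.2 * Y.2 := by
      by_cases hC1 : C.1 = D.1
      · have hXD1 : X.1 = D.1 := cx2.symm.trans hC1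
        have halt : X.2 * D.2 < 0 ∨ D.2 ^ 2 ≤ X.2 * D.2 := by
          by_contra hcon
          push_neg at hcon
          exact cx4 ⟨hXD1, hcon.1, hcon.2⟩
        by_cases hY20 : Y.2 = 0
        · exact Or.inr (Or.inr (by rw [hY20]; norm_num))
        · have hypos : 0 < Y.2 * D.2 := lt_of_le_of_ne hy3 (Ne.symm (mul_ne_zero hY20 hy2))
          rcases halt with h | h
          · exact Or.inr (Or.inl (by
              nlinarith [mul_pos hypos (by linarith : (0:ℝ) < -(X.2 * D.2))]))
          · exact Or.inr (Or.inr (by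
              nlinarith [mul_pos hypos (by linarith : (0:ℝ) < X.2 * D.2 - Y.2 * D.2)]))
      · exact Or.inl (fun h => hC1 (cx2.trans (h.symm.trans hy1)))
    exact (msi C Y X).2 (mem_case3 cx1 hne cx2 cx3)
  · -- (c,c) : both on C's column
    have hxc : 0 < C.2 * X.2 := lt_of_lt_of_le (sq_pos_of_ne' cx1) cx3
    have hyc : 0 < C.2 * Y.2 := lt_of_lt_of_le (sq_pos_of_ne' cy1) cy3
    have hc0 : C.2 ≠ 0 := by intro h; rw [h, zero_mul] at hxc; exact lt_irrefl 0 hxc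
    rcases le_total (Y.2 ^ 2) (X.2 * Y.2) with h | h
    · left
      exact (msi C Y X).2 (mem_case3 cx1 (Or.inr (Or.inr h)) cx2 cx3)
    · right
      have key : X.2 ^ 2 ≤ Y.2 * X.2 := by
        rcases lt_trichotomy C.2 0 with hc | hc | hc
        · have hx : X.2 < 0 := by nlinarith
          have hy' : Y.2 < 0 := by nlinarith
          nlinarith
        · exact absurd hc hc0
        · have hx : 0 < X.2 := by nlinarith
          have hy' : 0 < Y.2 := by nlinarith
          nlinarith
      exact (msi C X Y).2 (mem_case3 cy1 (Or.inr (Or.inr key)) cy2 cy3)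
  · -- (c,d)
    left
    exact (msi C Y X).2 (mem_case3 cx1 (Or.inr (Or.inr (by rw [dy1]; norm_num))) cx2 cx3)
  · -- (d,b)
    left
    exact (msi C Y X).2 (mem_case4 dx1 (fun h => dx2 (h.symm.trans hy1))
      (by rw [hy1]; exact dx3))
  · -- (d,c)
    right
    exact (msi C X Y).2 (mem_case3 cy1 (Or.inr (Or.inr (by rw [dx1]; norm_num))) cy2 cy3)
  · -- (d,d)
    have hxy1 : X.1 ≠ Y.1 := fun h => hXY (Prod.ext_iff.2 ⟨h, dx1.trans dy1.symm⟩)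
    rcases line_med dx3 dy3 with h | h
    · left; exact (msi C Y X).2 (mem_case4 dx1 (Ne.symm hxy1) h)
    · right; exact (msi C X Y).2 (mem_case4 dy1 hxy1 h)

theorem four_point (hd_eq : ∀ x y, d x y = 0 ↔ x = y) (hd_symm : ∀ x y, d x y = d y x)
    (hd_tri : ∀ x y z, d x z ≤ d x y + d y z)
    (hC : ∀ P1 P2, Cd d P1 P2 = Criv P1 P2) :
    ∀ A B C D : ℝ × ℝ, d A B + d C D ≤ max (d A C + d B D) (d A D + d B C) := by
  intro A B C D
  have hd0 : ∀ x, d x x = 0 := fun x => (hd_eq x x).2 rfl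
  by_cases hAB : A = B
  · subst hAB
    refine le_max_iff.mpr (Or.inl ?_)
    have := hd_tri C A D
    have := hd_symm C A
    have := hd_symm C D
    rw [hd0 A]
    linarith [hd_tri C A D, hd_symm C A, hd_symm A C]
  by_cases hCD : C = D
  · subst hCD
    refine le_max_iff.mpr (Or.inl ?_)
    rw [hd0 C]
    linarith [hd_tri A C B, hd_symm C B, hd_symm B C]
  by_cases hAC : A = C
  · subst hAC
    refine le_max_iff.mpr (Or.inr ?_)
    linarith [hd_symm A B, hd_symm B A, hd_symm A D, hd_symm D A]
  by_cases hAD : A = D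
  · subst hAD
    refine le_max_iff.mpr (Or.inl ?_)
    linarith [hd_symm A B, hd_symm B A, hd_symm C A, hd_symm A C]
  by_cases hBC : B = C
  · subst hBC
    refine le_max_iff.mpr (Or.inl ?_)
    linarith [hd_symm B D, hd_symm D B, hd_symm A B, hd_symm B A]
  by_cases hBD : B = D
  · subst hBD
    refine le_max_iff.mpr (Or.inr ?_)
    linarith [hd_symm C B, hd_symm B C]
  obtain ⟨O1, ⟨h1AC, h1CD⟩, h1AD⟩ := tripod hd_eq hd_symm hC A C D hAC hCD hAD
  obtain ⟨O2, ⟨h2BC, h2CD⟩, h2BD⟩ := tripod hd_eq hd_symm hC B C D hBC hCD hBD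
  rcases key_comp hd_eq hd_symm hC C D O1 O2 h1CD h2CD with hk | hk
  · refine le_max_iff.mpr (Or.inr ?_)
    simp only [seg, Set.mem_setOf_eq] at h1AC h1CD h1AD h2BC h2CD h2BD hk
    linarith [h1AD, h1CD, h2BC, hk, hd_tri A O1 B, hd_tri O1 O2 B,
      hd_symm O2 C, hd_symm O2 B, hd_symm O1 B]
  · refine le_max_iff.mpr (Or.inl ?_)
    simp only [seg, Set.mem_setOf_eq] at h1AC h1CD h1AD h2BC h2CD h2BD hk
    linarith [h1AC, h2BD, h2CD, hk, hd_tri A O1 B, hd_tri O1 O2 B,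
      hd_symm O2 B, hd_symm O1 C, hd_symm O2 O1, hd_symm O1 B]

end SegLemmas

theorem river_Cd_characterization_implies_tree
    (d : ℝ × ℝ → ℝ × ℝ → ℝ)
    (hd_eq : ∀ x y, d x y = 0 ↔ x = y)
    (hd_symm : ∀ x y, d x y = d y x)
    (hd_tri : ∀ x y z, d x z ≤ d x y + d y z)
    (hC : ∀ P1 P2, Cd d P1 P2 = Criv P1 P2) :
    (∀ A B C : ℝ × ℝ, A ≠ B → B ≠ C → A ≠ C →
      ∃ O, O ∈ seg d A B ∩ seg d B C ∩ seg d A C) ∧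
    (∀ A B C D : ℝ × ℝ,
      d A B + d C D ≤ max (d A C + d B D) (d A D + d B C)) :=
  ⟨tripod hd_eq hd_symm hC, four_point hd_eq hd_symm hd_tri hC⟩
end

section
/- Let d' be a metric on ℝⁿ for which there exists a continuous function f : [0,∞) → [0,∞) with f(1) = 1 such that d'(a•x, x) = f(‖a•x − x‖) for all x ∈ ℝⁿ and all a ≥ 0. Then the following are equivalent: (i) d' = d1, the radial metric; (ii) for all P1, P2 ∈ ℝⁿ, C_{d'}(P1,P2) = Crad(P1,P2). -/
/-!
For `d1` the space is a star of rays glued at `0`, Euclidean along each line through `0`; so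
`X ∈ C_{d1}(A, B)` says that `B` lies between `X` and `A`. On the line of `A` and `B` this is
betweenness of coordinates, and a point `X` off that line reaches it through `0`, which reduces
the question to `X = 0`.

Conversely, if `C_{d'} = Crad`, then `X = 0` and `P2 = s • P1` give
`d'(0, P1) = d'(0, s • P1) + d'(P1, s • P1)`, i.e. `f (u + v) = f u + f v` on `[0, ∞)`, and a
nonnegative additive `f` with `f 1 = 1` is the identity. With `s = 0` the same identity gives
`d'(X, z) = ‖X‖ + ‖z‖` for `X` off the open ray through `z`, while along the line of `z` the
distance is `f` of the Euclidean one.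
-/

open Set

lemma abs_sub_eq_abs_sub_add_abs_sub_iff {u a b : ℝ} :
    |u - a| = |u - b| + |a - b| ↔ b ∈ uIcc u a := by
  rw [← segment_eq_uIcc, mem_segment_iff_wbtw, ← dist_add_dist_eq_iff]
  simp only [Real.dist_eq]
  rw [abs_sub_comm b a, eq_comm]

lemma eq_self_of_map_add_of_nonneg {f : ℝ → ℝ}
    (hadd : ∀ u v, 0 ≤ u → 0 ≤ v → f (u + v) = f u + f v)
    (hnonneg : ∀ u ∈ Ici (0 : ℝ), 0 ≤ f u) (hone : f 1 = 1) {u : ℝ} (hu : 0 ≤ u) :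
    f u = u := by
  have hmono : ∀ a b, 0 ≤ a → a ≤ b → f a ≤ f b := fun a b ha hab => by
    have h := hadd a (b - a) ha (sub_nonneg.2 hab)
    rw [add_sub_cancel] at h
    linarith [hnonneg (b - a) (sub_nonneg.2 hab)]
  have hnsmul : ∀ (k : ℕ) (x : ℝ), 0 ≤ x → f (k * x) = k * f x := by
    intro k x hx
    induction k with
    | zero => simpa using hadd 0 0 le_rfl le_rfl
    | succ k ih =>
      push_cast
      rw [add_one_mul, hadd _ _ (by positivity) hx, ih, add_one_mul]
  have hnat : ∀ k : ℕ, f k = k := fun k => by simpa [hone] using hnsmul k 1 zero_le_one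
  -- `p = ⌊q u⌋₊` bounds both `q u` and `q f(u) = f(q u)` between `p` and `p + 1`.
  have hbound : ∀ q : ℕ, q * |f u - u| ≤ 1 := by
    intro q
    set p := ⌊q * u⌋₊
    have hp : (p : ℝ) ≤ q * u := Nat.floor_le (by positivity)
    have hp' : q * u < p + 1 := Nat.lt_floor_add_one _
    have hfp : (p : ℝ) ≤ q * f u := by
      rw [← hnsmul q u hu, ← hnat p]; exact hmono _ _ (Nat.cast_nonneg p) hp
    have hfp' : q * f u ≤ p + 1 := by
      have hp1 := hnat (p + 1)
      push_cast at hp1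
      rw [← hnsmul q u hu, ← hp1]
      exact hmono _ _ (by positivity) hp'.le
    rw [← abs_of_nonneg (Nat.cast_nonneg (α := ℝ) q), ← abs_mul, abs_le]
    constructor <;> linarith
  by_contra hne
  have hpos : 0 < |f u - u| := abs_pos.2 (sub_ne_zero.2 hne)
  obtain ⟨q, hq⟩ := exists_nat_gt (1 / |f u - u|)
  rw [div_lt_iff₀ hpos] at hq
  linarith [hbound q]

variable {n : ℕ}

lemma radialDist_comm (A B : EuclideanSpace ℝ (Fin n)) : radialDist A B = radialDist B A := by
  unfold radialDist
  by_cases h : (∃ a : ℝ, A = a • B) ∨ (∃ a : ℝ, B = a • A)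
  · rw [if_pos h, if_pos h.symm, norm_sub_rev]
  · rw [if_neg h, if_neg (mt Or.symm h), add_comm]

lemma radialDist_smul_smul (z : EuclideanSpace ℝ (Fin n)) (t s : ℝ) :
    radialDist (t • z) (s • z) = |t - s| * ‖z‖ := by
  have hcollinear : (∃ a : ℝ, t • z = a • s • z) ∨ (∃ a : ℝ, s • z = a • t • z) := by
    rcases eq_or_ne s 0 with rfl | hs
    · exact Or.inr ⟨0, by simp⟩
    · exact Or.inl ⟨t / s, by rw [smul_smul, div_mul_cancel₀ _ hs]⟩
  rw [radialDist, if_pos hcollinear, ← sub_smul, norm_smul, Real.norm_eq_abs]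

lemma radialDist_smul_left (z : EuclideanSpace ℝ (Fin n)) (t : ℝ) :
    radialDist (t • z) z = |t - 1| * ‖z‖ := by
  simpa using radialDist_smul_smul z t 1

lemma radialDist_self (A : EuclideanSpace ℝ (Fin n)) : radialDist A A = 0 := by
  simpa using radialDist_smul_left A 1

lemma radialDist_zero_left (A : EuclideanSpace ℝ (Fin n)) : radialDist 0 A = ‖A‖ := by
  simpa using radialDist_smul_left A 0

lemma radialDist_of_forall_ne_smul {X P : EuclideanSpace ℝ (Fin n)} (h : ∀ t : ℝ, X ≠ t • P) :
    radialDist X P = ‖X‖ + ‖P‖ := by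
  rcases eq_or_ne P 0 with rfl | hP
  · rw [radialDist_comm, radialDist_zero_left, norm_zero, add_zero]
  rw [radialDist, if_neg]
  rintro (⟨a, ha⟩ | ⟨a, ha⟩)
  · exact h a ha
  · have ha0 : a ≠ 0 := by rintro rfl; exact hP (by simpa using ha)
    exact h a⁻¹ (by rw [ha, smul_smul, inv_mul_cancel₀ ha0, one_smul])

lemma radialDist_le_norm_add_norm (A B : EuclideanSpace ℝ (Fin n)) :
    radialDist A B ≤ ‖A‖ + ‖B‖ := by
  unfold radialDist
  split_ifs
  exacts [norm_sub_le A B, le_rfl]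

lemma norm_le_norm_add_radialDist (A B : EuclideanSpace ℝ (Fin n)) :
    ‖A‖ ≤ ‖B‖ + radialDist A B := by
  unfold radialDist
  split_ifs
  · exact norm_le_norm_add_norm_sub' A B
  · linarith [norm_nonneg B]

lemma smul_mem_Cd_radialDist_smul_iff {z : EuclideanSpace ℝ (Fin n)} (hz : z ≠ 0) {u a b : ℝ} :
    u • z ∈ Cd radialDist (a • z) (b • z) ↔ b ∈ uIcc u a := by
  simp only [Cd, mem_ofPred_eq, radialDist_smul_smul, ← add_mul]
  rw [mul_left_inj' (norm_ne_zero_iff.2 hz), abs_sub_eq_abs_sub_add_abs_sub_iff]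

lemma mem_Cd_radialDist_iff_zero_mem {X A B : EuclideanSpace ℝ (Fin n)}
    (hXA : ∀ t : ℝ, X ≠ t • A) (hXB : ∀ t : ℝ, X ≠ t • B) :
    X ∈ Cd radialDist A B ↔ 0 ∈ Cd radialDist A B := by
  simp only [Cd, mem_ofPred_eq, radialDist_zero_left, radialDist_of_forall_ne_smul hXA,
    radialDist_of_forall_ne_smul hXB, add_assoc, add_right_inj]

lemma zero_mem_Cd_radialDist_of_mem {X A B : EuclideanSpace ℝ (Fin n)}
    (hXB : ∀ t : ℝ, X ≠ t • B) (hX : X ∈ Cd radialDist A B) : 0 ∈ Cd radialDist A B := by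
  simp only [Cd, mem_ofPred_eq, radialDist_zero_left, radialDist_of_forall_ne_smul hXB] at hX ⊢
  linarith [radialDist_le_norm_add_norm X A, norm_le_norm_add_radialDist A B]

lemma mem_Cd_radialDist_iff_mem_Cd_zero {X A B : EuclideanSpace ℝ (Fin n)}
    (hAX : ∀ t : ℝ, A ≠ t • X) (hAB : ∀ t : ℝ, A ≠ t • B) :
    X ∈ Cd radialDist A B ↔ X ∈ Cd radialDist 0 B := by
  simp only [Cd, mem_ofPred_eq]
  rw [radialDist_comm X A, radialDist_of_forall_ne_smul hAX, radialDist_of_forall_ne_smul hAB,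
    radialDist_comm X 0, radialDist_zero_left, radialDist_zero_left]
  constructor <;> intro h <;> linarith

lemma Crad_self (P : EuclideanSpace ℝ (Fin n)) : Crad P P = univ := if_pos rfl

lemma Crad_smul_of_mem_Ico {z : EuclideanSpace ℝ (Fin n)} (hz : z ≠ 0) {s : ℝ}
    (hs : s ∈ Ico (0 : ℝ) 1) : Crad z (s • z) = univ \ {X | ∃ t : ℝ, s < t ∧ X = t • z} := by
  have hne : z ≠ s • z := fun h => hs.2.ne' (smul_left_injective ℝ hz (by simpa using h))
  have hex : ∃ s' : ℝ, s' ∈ Ico (0 : ℝ) 1 ∧ s • z = s' • z := ⟨s, hs, rfl⟩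
  rw [Crad, if_neg hne, dif_pos hex, ← smul_left_injective ℝ hz (Classical.choose_spec hex).2]

lemma Crad_of_not_exists_mem_Ico {P1 P2 : EuclideanSpace ℝ (Fin n)} (hne : P1 ≠ P2)
    (h : ¬∃ s : ℝ, s ∈ Ico (0 : ℝ) 1 ∧ P2 = s • P1) :
    Crad P1 P2 = {X | ∃ t : ℝ, 1 ≤ t ∧ X = t • P2} := by
  rw [Crad, if_neg hne, dif_neg h]

lemma smul_mem_Cd_radialDist_iff_one_le {P1 P2 : EuclideanSpace ℝ (Fin n)} (hne : P1 ≠ P2)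
    (h : ¬∃ s : ℝ, s ∈ Ico (0 : ℝ) 1 ∧ P2 = s • P1) (t : ℝ) :
    t • P2 ∈ Cd radialDist P1 P2 ↔ 1 ≤ t := by
  have hP2 : P2 ≠ 0 := by
    rintro rfl
    exact h ⟨0, ⟨le_rfl, one_pos⟩, (zero_smul ℝ P1).symm⟩
  -- `P1` acts as the point `a • P2`, with `a = 0` when `P1` is off the line of `P2`.
  suffices ∃ a < 1, (t • P2 ∈ Cd radialDist P1 P2 ↔ 1 ∈ uIcc t a) by
    obtain ⟨a, ha, hiff⟩ := this
    rw [hiff, mem_uIcc]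
    constructor
    · rintro (⟨-, h1⟩ | ⟨-, h1⟩) <;> linarith
    · exact fun h1 => Or.inr ⟨ha.le, h1⟩
  by_cases hcol : ∃ a : ℝ, P1 = a • P2
  · obtain ⟨a, rfl⟩ := hcol
    have ha1 : a ≠ 1 := by rintro rfl; exact hne (one_smul ℝ P2)
    have ha : ¬1 < a := fun ha =>
      h ⟨a⁻¹, ⟨by positivity, inv_lt_one_of_one_lt₀ ha⟩,
        by rw [smul_smul, inv_mul_cancel₀ (by positivity), one_smul]⟩
    refine ⟨a, lt_of_le_of_ne (not_lt.1 ha) ha1, ?_⟩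
    simpa using smul_mem_Cd_radialDist_smul_iff hP2 (u := t) (a := a) (b := 1)
  · push Not at hcol
    refine ⟨0, one_pos, ?_⟩
    rw [mem_Cd_radialDist_iff_mem_Cd_zero (fun a ha => hcol (a * t) (by rw [ha, smul_smul])) hcol]
    simpa using smul_mem_Cd_radialDist_smul_iff hP2 (u := t) (a := 0) (b := 1)

lemma Cd_radialDist_smul_of_mem_Ico {z : EuclideanSpace ℝ (Fin n)} (hz : z ≠ 0) {s : ℝ}
    (hs : s ∈ Ico (0 : ℝ) 1) :
    Cd radialDist z (s • z) = univ \ {X | ∃ t : ℝ, s < t ∧ X = t • z} := by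
  ext X
  simp only [mem_sdiff, mem_univ, true_and, mem_ofPred_eq, not_exists, not_and]
  by_cases hX : ∃ u : ℝ, X = u • z
  · obtain ⟨u, rfl⟩ := hX
    have hiff := smul_mem_Cd_radialDist_smul_iff hz (u := u) (a := 1) (b := s)
    rw [one_smul] at hiff
    simp only [hiff, mem_uIcc, smul_left_inj hz]
    constructor
    · rintro (⟨hus, -⟩ | ⟨h1s, -⟩) t hst rfl <;> linarith [hs.2]
    · exact fun h => Or.inl ⟨not_lt.1 fun hsu => h u hsu rfl, hs.2.le⟩
  · push Not at hX
    rw [mem_Cd_radialDist_iff_zero_mem hX (fun t h => hX (t * s) (by rw [h, smul_smul]))]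
    have hiff := smul_mem_Cd_radialDist_smul_iff hz (u := 0) (a := 1) (b := s)
    rw [zero_smul, one_smul] at hiff
    exact iff_of_true (hiff.2 (mem_uIcc.2 (Or.inl ⟨hs.1, hs.2.le⟩))) fun t _ => hX t

lemma Cd_radialDist_of_not_exists_mem_Ico {P1 P2 : EuclideanSpace ℝ (Fin n)} (hne : P1 ≠ P2)
    (h : ¬∃ s : ℝ, s ∈ Ico (0 : ℝ) 1 ∧ P2 = s • P1) :
    Cd radialDist P1 P2 = {X | ∃ t : ℝ, 1 ≤ t ∧ X = t • P2} := by
  ext X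
  constructor
  · intro hX
    by_cases hline : ∃ t : ℝ, X = t • P2
    · obtain ⟨t, rfl⟩ := hline
      exact ⟨t, (smul_mem_Cd_radialDist_iff_one_le hne h t).1 hX, rfl⟩
    · push Not at hline
      have h0 := zero_mem_Cd_radialDist_of_mem hline hX
      rw [← zero_smul ℝ P2, smul_mem_Cd_radialDist_iff_one_le hne h] at h0
      norm_num at h0
  · rintro ⟨t, ht, rfl⟩
    exact (smul_mem_Cd_radialDist_iff_one_le hne h t).2 ht

theorem Cd_radialDist (P1 P2 : EuclideanSpace ℝ (Fin n)) : Cd radialDist P1 P2 = Crad P1 P2 := by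
  by_cases hne : P1 = P2
  · subst hne
    ext X
    simp [Cd, Crad_self, radialDist_self]
  by_cases h : ∃ s : ℝ, s ∈ Ico (0 : ℝ) 1 ∧ P2 = s • P1
  · obtain ⟨s, hs, rfl⟩ := h
    have hz : P1 ≠ 0 := by rintro rfl; simp at hne
    rw [Crad_smul_of_mem_Ico hz hs, Cd_radialDist_smul_of_mem_Ico hz hs]
  · rw [Crad_of_not_exists_mem_Ico hne h, Cd_radialDist_of_not_exists_mem_Ico hne h]

section Characterization

variable {d' : EuclideanSpace ℝ (Fin n) → EuclideanSpace ℝ (Fin n) → ℝ} {f : ℝ → ℝ}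

lemma dist_zero_left_eq_apply_norm (hf : ∀ (x : EuclideanSpace ℝ (Fin n)) (a : ℝ), 0 ≤ a →
      d' (a • x) x = f ‖a • x - x‖) (y : EuclideanSpace ℝ (Fin n)) :
    d' 0 y = f ‖y‖ := by
  simpa using hf y 0 le_rfl

lemma dist_self_of_Cd_eq_Crad (hC : ∀ P1 P2, Cd d' P1 P2 = Crad P1 P2)
    (x : EuclideanSpace ℝ (Fin n)) : d' x x = 0 := by
  have hx : x ∈ Cd d' x x := by rw [hC, Crad_self]; trivial
  simp only [Cd, mem_ofPred_eq] at hx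
  linarith

lemma dist_eq_add_of_Cd_eq_Crad (hC : ∀ P1 P2, Cd d' P1 P2 = Crad P1 P2)
    {z X : EuclideanSpace ℝ (Fin n)} (hz : z ≠ 0) {s : ℝ} (hs : s ∈ Ico (0 : ℝ) 1)
    (hX : ∀ t : ℝ, s < t → X ≠ t • z) : d' X z = d' X (s • z) + d' z (s • z) := by
  have hmem : X ∈ Cd d' z (s • z) := by
    rw [hC, Crad_smul_of_mem_Ico hz hs]
    exact ⟨trivial, fun ⟨t, hst, h⟩ => hX t hst h⟩
  exact hmem

lemma map_add_of_Cd_eq_Crad (hC : ∀ P1 P2, Cd d' P1 P2 = Crad P1 P2)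
    (hd_symm : ∀ x y, d' x y = d' y x)
    (hf : ∀ (x : EuclideanSpace ℝ (Fin n)) (a : ℝ), 0 ≤ a → d' (a • x) x = f ‖a • x - x‖)
    {e : EuclideanSpace ℝ (Fin n)} (he : e ≠ 0) {u v : ℝ} (hu : 0 ≤ u) (hv : 0 ≤ v) :
    f (u + v) = f u + f v := by
  have hf0 : f 0 = 0 := by
    simpa [dist_self_of_Cd_eq_Crad hC] using (hf 0 1 zero_le_one).symm
  rcases hv.eq_or_lt with rfl | hv
  · rw [add_zero, hf0, add_zero]
  have huv : 0 < u + v := by linarith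
  set z := ((u + v) / ‖e‖) • e
  have hz : ‖z‖ = u + v := by
    rw [norm_smul, Real.norm_of_nonneg (by positivity), div_mul_cancel₀ _ (norm_ne_zero_iff.2 he)]
  have hz0 : z ≠ 0 := norm_ne_zero_iff.1 (hz ▸ huv.ne')
  set s := u / (u + v)
  have hs : s ∈ Ico (0 : ℝ) 1 := ⟨by positivity, (div_lt_one huv).2 (by linarith)⟩
  have hsz : ‖s • z‖ = u := by
    rw [norm_smul, Real.norm_of_nonneg hs.1, hz, div_mul_cancel₀ _ huv.ne']
  have hsz' : ‖s • z - z‖ = v := by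
    rw [show s • z - z = (s - 1) • z by rw [sub_smul, one_smul], norm_smul, Real.norm_eq_abs, abs_sub_comm,
      abs_of_pos (by linarith [hs.2]), hz, sub_mul, one_mul, div_mul_cancel₀ _ huv.ne']
    ring
  have h := dist_eq_add_of_Cd_eq_Crad hC hz0 hs
    (fun t hst h0 => smul_ne_zero (by linarith [hs.1]) hz0 h0.symm)
  rwa [dist_zero_left_eq_apply_norm hf, dist_zero_left_eq_apply_norm hf, hd_symm, hf z s hs.1, hz, hsz,
    hsz'] at h

lemma apply_eq_self_of_Cd_eq_Crad (hC : ∀ P1 P2, Cd d' P1 P2 = Crad P1 P2)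
    (hd_symm : ∀ x y, d' x y = d' y x) (hf_nonneg : ∀ u ∈ Ici (0 : ℝ), 0 ≤ f u) (hf_one : f 1 = 1)
    (hf : ∀ (x : EuclideanSpace ℝ (Fin n)) (a : ℝ), 0 ≤ a → d' (a • x) x = f ‖a • x - x‖)
    {e : EuclideanSpace ℝ (Fin n)} (he : e ≠ 0) {u : ℝ} (hu : 0 ≤ u) : f u = u :=
  eq_self_of_map_add_of_nonneg (fun _ _ => map_add_of_Cd_eq_Crad hC hd_symm hf he) hf_nonneg
    hf_one hu

lemma dist_eq_norm_add_norm_of_Cd_eq_Crad (hC : ∀ P1 P2, Cd d' P1 P2 = Crad P1 P2)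
    (hd_symm : ∀ x y, d' x y = d' y x) (hf_nonneg : ∀ u ∈ Ici (0 : ℝ), 0 ≤ f u) (hf_one : f 1 = 1)
    (hf : ∀ (x : EuclideanSpace ℝ (Fin n)) (a : ℝ), 0 ≤ a → d' (a • x) x = f ‖a • x - x‖)
    {z X : EuclideanSpace ℝ (Fin n)} (hz : z ≠ 0) (hX : ∀ t : ℝ, 0 < t → X ≠ t • z) :
    d' X z = ‖X‖ + ‖z‖ := by
  have hid := fun u => apply_eq_self_of_Cd_eq_Crad hC hd_symm hf_nonneg hf_one hf hz (u := u)
  have h := dist_eq_add_of_Cd_eq_Crad hC hz ⟨le_rfl, one_pos⟩ hX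
  rwa [zero_smul, hd_symm X 0, hd_symm z 0, dist_zero_left_eq_apply_norm hf,
    dist_zero_left_eq_apply_norm hf, hid _ (norm_nonneg _), hid _ (norm_nonneg _)] at h

lemma dist_smul_left_of_Cd_eq_Crad (hC : ∀ P1 P2, Cd d' P1 P2 = Crad P1 P2)
    (hd_symm : ∀ x y, d' x y = d' y x) (hf_nonneg : ∀ u ∈ Ici (0 : ℝ), 0 ≤ f u) (hf_one : f 1 = 1)
    (hf : ∀ (x : EuclideanSpace ℝ (Fin n)) (a : ℝ), 0 ≤ a → d' (a • x) x = f ‖a • x - x‖)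
    {z : EuclideanSpace ℝ (Fin n)} (hz : z ≠ 0) (t : ℝ) :
    d' (t • z) z = |t - 1| * ‖z‖ := by
  rcases le_or_gt 0 t with ht | ht
  · rw [hf z t ht, show t • z - z = (t - 1) • z by rw [sub_smul, one_smul], norm_smul,
      Real.norm_eq_abs, apply_eq_self_of_Cd_eq_Crad hC hd_symm hf_nonneg hf_one hf hz (by positivity)]
  · have hX : ∀ t' : ℝ, 0 < t' → t • z ≠ t' • z := fun t' ht' h => by
      rw [smul_left_inj hz] at h
      linarith
    rw [dist_eq_norm_add_norm_of_Cd_eq_Crad hC hd_symm hf_nonneg hf_one hf hz hX, norm_smul,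
      Real.norm_eq_abs, abs_of_neg ht, abs_of_neg (by linarith : t - 1 < 0)]
    ring

theorem eq_radialDist_of_Cd_eq_Crad (hC : ∀ P1 P2, Cd d' P1 P2 = Crad P1 P2)
    (hd_symm : ∀ x y, d' x y = d' y x) (hf_nonneg : ∀ u ∈ Ici (0 : ℝ), 0 ≤ f u) (hf_one : f 1 = 1)
    (hf : ∀ (x : EuclideanSpace ℝ (Fin n)) (a : ℝ), 0 ≤ a → d' (a • x) x = f ‖a • x - x‖)
    (x y : EuclideanSpace ℝ (Fin n)) : d' x y = radialDist x y := by
  by_cases hyx : ∃ t : ℝ, y = t • x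
  · obtain ⟨t, rfl⟩ := hyx
    rcases eq_or_ne x 0 with rfl | hx
    · rw [smul_zero, dist_self_of_Cd_eq_Crad hC, radialDist_self]
    · rw [hd_symm, radialDist_comm, radialDist_smul_left,
        dist_smul_left_of_Cd_eq_Crad hC hd_symm hf_nonneg hf_one hf hx]
  by_cases hxy : ∃ t : ℝ, x = t • y
  · obtain ⟨t, rfl⟩ := hxy
    have hy : y ≠ 0 := by rintro rfl; exact hyx ⟨0, by simp⟩
    rw [radialDist_smul_left, dist_smul_left_of_Cd_eq_Crad hC hd_symm hf_nonneg hf_one hf hy]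
  push Not at hyx hxy
  have hy : y ≠ 0 := by simpa using hyx 0
  rw [dist_eq_norm_add_norm_of_Cd_eq_Crad hC hd_symm hf_nonneg hf_one hf hy fun t _ => hxy t,
    radialDist_of_forall_ne_smul hxy]

end Characterization

theorem radial_identification_general {n : ℕ}
    (d' : EuclideanSpace ℝ (Fin n) → EuclideanSpace ℝ (Fin n) → ℝ)
    (hd_symm : ∀ x y, d' x y = d' y x)
    (f : ℝ → ℝ)
    (hf_nonneg : ∀ u ∈ Set.Ici (0 : ℝ), 0 ≤ f u)
    (hf_one : f 1 = 1)
    (hf : ∀ (x : EuclideanSpace ℝ (Fin n)) (a : ℝ), 0 ≤ a →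
      d' (a • x) x = f ‖a • x - x‖) :
    (∀ x y, d' x y = radialDist x y) ↔
    (∀ P1 P2, Cd d' P1 P2 = Crad P1 P2) := by
  constructor
  · intro h P1 P2
    rw [show d' = radialDist from funext₂ h, Cd_radialDist]
  · intro hC
    exact eq_radialDist_of_Cd_eq_Crad hC hd_symm hf_nonneg hf_one hf

theorem radial_identification {n : ℕ}
    (d' : EuclideanSpace ℝ (Fin n) → EuclideanSpace ℝ (Fin n) → ℝ)
    (hd_eq : ∀ x y, d' x y = 0 ↔ x = y)
    (hd_symm : ∀ x y, d' x y = d' y x)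
    (hd_tri : ∀ x y z, d' x z ≤ d' x y + d' y z)
    (f : ℝ → ℝ)
    (hf_cont : ContinuousOn f (Set.Ici 0))
    (hf_nonneg : ∀ u ∈ Set.Ici (0 : ℝ), 0 ≤ f u)
    (hf_one : f 1 = 1)
    (hf : ∀ (x : EuclideanSpace ℝ (Fin n)) (a : ℝ), 0 ≤ a →
      d' (a • x) x = f ‖a • x - x‖) :
    (∀ x y, d' x y = radialDist x y) ↔
    (∀ P1 P2, Cd d' P1 P2 = Crad P1 P2) :=
  radial_identification_general d' hd_symm f hf_nonneg hf_one hf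
end

section
/- Let d' be a metric on ℝ² for which there exist continuous functions g₁, g₂ : [0,∞) → [0,∞) with g₁(1) = g₂(1) = 1 such that d'(x,y) = g₁(‖x − y‖) whenever x₁ = y₁, and d'(x,y) = g₂(‖x − y‖) whenever x₂ = y₂ = 0 (‖·‖ the Euclidean norm on ℝ²). Then the following are equivalent: (i) d' = d2, the river metric; (ii) for all P1, P2 ∈ ℝ², C_{d'}(P1,P2) = Criv(P1,P2). -/
/-- The Euclidean norm of a point of ℝ². -/
noncomputable def enorm2 (x : ℝ × ℝ) : ℝ :=
  Real.sqrt (x.1 ^ 2 + x.2 ^ 2)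

lemma abs_add_eq_iff' {x y : ℝ} : |x + y| = |x| + |y| ↔ 0 ≤ x * y := by
  rcases abs_cases x with ⟨h1, h1'⟩ | ⟨h1, h1'⟩ <;>
  rcases abs_cases y with ⟨h2, h2'⟩ | ⟨h2, h2'⟩ <;>
  rcases abs_cases (x + y) with ⟨h3, h3'⟩ | ⟨h3, h3'⟩ <;>
  constructor <;> intro h <;> nlinarith

lemma between_iff' {a b c : ℝ} : |a - c| = |a - b| + |b - c| ↔ 0 ≤ (a - b) * (b - c) := by
  have h : a - c = (a - b) + (b - c) := by ring
  rw [h, abs_add_eq_iff']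

lemma ray_iff {y b : ℝ} (hb : b ≠ 0) : (∃ t : ℝ, 1 ≤ t ∧ y = t * b) ↔ 0 ≤ (y - b) * b := by
  constructor
  · rintro ⟨t, ht, rfl⟩
    nlinarith [mul_nonneg (sub_nonneg.2 ht) (mul_self_nonneg b)]
  · intro h
    refine ⟨y / b, ?_, (div_mul_cancel₀ y hb).symm⟩
    by_contra hlt
    push_neg at hlt
    have hy : (y / b) * b = y := div_mul_cancel₀ y hb
    rw [← hy] at h
    nlinarith [mul_pos (sub_pos.2 hlt) (mul_self_pos.2 hb)]

lemma Cd_riv (P1 P2 : ℝ × ℝ) : Cd riverDist P1 P2 = Criv P1 P2 := by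
  obtain ⟨p, a⟩ := P1; obtain ⟨q, b⟩ := P2
  unfold Criv
  split_ifs with hPP h hb
  · -- P1 = P2
    rw [hPP]; ext X; simp [Cd, riverDist]
  · -- vertical, b = s * a with s ∈ [0,1)
    have hpq : p = q := h.1
    subst hpq
    obtain ⟨hsI, hsa⟩ := Classical.choose_spec h.2
    set s := Classical.choose h.2 with hs_def
    obtain ⟨hs0, hs1⟩ := hsI
    have hsa' : b = s * a := hsa
    have ha : a ≠ 0 := by
      intro h0
      apply hPP
      have : b = 0 := by rw [hsa', h0, mul_zero]
      rw [h0, this]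
    have ha2 : 0 < a * a := mul_self_pos.2 ha
    ext ⟨x, y⟩
    simp only [Cd, Set.mem_setOf_eq, Set.mem_diff, Set.mem_univ, true_and, Prod.mk.injEq]
    by_cases hx : x = p
    · subst hx
      have l1 : riverDist (x, y) (x, a) = |y - a| := by simp [riverDist]
      have l2 : riverDist (x, y) (x, b) = |y - b| := by simp [riverDist]
      have l3 : riverDist (x, a) (x, b) = |a - b| := by simp [riverDist]
      rw [l1, l2, l3]
      have key : |y - a| = |y - b| + |a - b| ↔ 0 ≤ (y - b) * (b - a) := by
        rw [abs_sub_comm a b]; exact between_iff'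
      rw [key]
      constructor
      · rintro hcd ⟨t, hst, -, rfl⟩
        rw [hsa'] at hcd
        nlinarith [mul_pos (sub_pos.2 hst) (sub_pos.2 hs1)]
      · intro hne
        have ht : y / a ≤ s := by
          by_contra hlt
          push_neg at hlt
          exact hne ⟨y / a, hlt, rfl, (div_mul_cancel₀ y ha).symm⟩
        have hy : (y / a) * a = y := div_mul_cancel₀ y ha
        rw [hsa', ← hy]
        nlinarith [mul_nonneg (mul_nonneg (sub_nonneg.2 ht) (sub_pos.2 hs1).le) ha2.le]
    · have l1 : riverDist (x, y) (p, a) = |y| + |x - p| + |a| := by simp [riverDist, hx]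
      have l2 : riverDist (x, y) (p, b) = |y| + |x - p| + |b| := by simp [riverDist, hx]
      have l3 : riverDist (p, a) (p, b) = |a - b| := by simp [riverDist]
      rw [l1, l2, l3]
      have e1 : |b| = s * |a| := by rw [hsa', abs_mul, abs_of_nonneg hs0]
      have e2 : |a - b| = (1 - s) * |a| := by
        rw [hsa', show a - s * a = (1 - s) * a from by ring, abs_mul,
          abs_of_nonneg (by linarith)]
      constructor
      · rintro - ⟨t, -, hxp, -⟩; exact hx hxp
      · intro _; rw [e1, e2]; linarith
  · -- third branch: P2.2 ≠ 0
    have hb' : b ≠ 0 := hb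
    by_cases hpq : p = q
    · subst hpq
      have hab : a ≠ b := fun he => hPP (by rw [he])
      have hns : ¬∃ s : ℝ, s ∈ Set.Ico (0:ℝ) 1 ∧ b = s * a := fun hB => h ⟨rfl, hB⟩
      have key : (a - b) * b < 0 := by
        by_contra hc
        push_neg at hc
        have ha : a ≠ 0 := by
          intro h0; subst h0
          nlinarith [mul_self_pos.2 hb']
        have hsa : (b / a) * a = b := div_mul_cancel₀ b ha
        set s := b / a with hs_def
        have ha2 : 0 < a * a := mul_self_pos.2 ha
        have hsne : s ≠ 0 := by
          intro h0; apply hb'; rw [← hsa, h0, zero_mul]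
        have hs1ne : s ≠ 1 := by
          intro h1; apply hab; rw [← hsa, h1, one_mul]
        have hprod : 0 ≤ s * (1 - s) := by
          by_contra hneg
          push_neg at hneg
          rw [← hsa] at hc
          nlinarith
        have hs0 : 0 ≤ s := by
          by_contra hneg; push_neg at hneg; nlinarith
        have hs1 : s < 1 := by
          rcases lt_or_eq_of_le (show s ≤ 1 by by_contra hgt; push_neg at hgt; nlinarith)
            with h' | h'
          · exact h'
          · exact absurd h' hs1ne
        exact hns ⟨s, ⟨hs0, hs1⟩, hsa.symm⟩
      have hba2 : 0 < (b - a) * (b - a) := by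
        apply mul_self_pos.2; intro h0
        have : a = b := by linarith [sub_eq_zero.1 h0]
        exact hab this
      ext ⟨x, y⟩
      simp only [Cd, Set.mem_setOf_eq, Prod.mk.injEq]
      by_cases hx : x = p
      · subst hx
        have l1 : riverDist (x, y) (x, a) = |y - a| := by simp [riverDist]
        have l2 : riverDist (x, y) (x, b) = |y - b| := by simp [riverDist]
        have l3 : riverDist (x, a) (x, b) = |a - b| := by simp [riverDist]
        rw [l1, l2, l3]
        have keyiff : |y - a| = |y - b| + |a - b| ↔ 0 ≤ (y - b) * (b - a) := by
          rw [abs_sub_comm a b]; exact between_iff'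
        rw [keyiff]
        constructor
        · intro h1
          have h2 : 0 ≤ (y - b) * b := by
            by_contra hcn; push_neg at hcn
            nlinarith [mul_nonneg h1 (show (0:ℝ) ≤ (b - a) * b by nlinarith), 
              mul_pos (neg_pos.2 hcn) hba2]
          obtain ⟨t, ht, hy⟩ := (ray_iff hb').2 h2
          exact ⟨t, ht, rfl, hy⟩
        · rintro ⟨t, ht, -, rfl⟩
          have h2 : 0 ≤ (t * b - b) * b := by
            nlinarith [mul_nonneg (sub_nonneg.2 ht) (mul_self_nonneg b)]
          nlinarith [mul_nonneg h2 (show (0:ℝ) ≤ (b - a) * b by nlinarith),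
            mul_self_pos.2 hb']
      · have l1 : riverDist (x, y) (p, a) = |y| + |x - p| + |a| := by simp [riverDist, hx]
        have l2 : riverDist (x, y) (p, b) = |y| + |x - p| + |b| := by simp [riverDist, hx]
        have l3 : riverDist (p, a) (p, b) = |a - b| := by simp [riverDist]
        rw [l1, l2, l3]
        constructor
        · intro h1
          exfalso
          have h2 : |a - 0| = |a - b| + |b - 0| := by
            simp only [sub_zero]; linarith
          have := between_iff'.1 h2
          simp only [sub_zero] at this
          linarith [key]
        · rintro ⟨t, -, hxp, -⟩; exact absurd hxp hx
    · -- p ≠ q, b ≠ 0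
      ext ⟨x, y⟩
      simp only [Cd, Set.mem_setOf_eq, Prod.mk.injEq]
      have hpqabs : 0 < |p - q| := abs_pos.2 (sub_ne_zero.2 hpq)
      have hbabs : 0 < |b| := abs_pos.2 hb'
      have l3 : riverDist (p, a) (q, b) = |a| + |p - q| + |b| := by simp [riverDist, hpq]
      by_cases hx1 : x = p
      · subst hx1
        have hxq : x ≠ q := hpq
        have l1 : riverDist (x, y) (x, a) = |y - a| := by simp [riverDist]
        have l2 : riverDist (x, y) (q, b) = |y| + |x - q| + |b| := by simp [riverDist, hxq]
        rw [l1, l2, l3]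
        constructor
        · intro h1
          exfalso
          have : |y - a| ≤ |y| + |a| := abs_sub y a
          linarith
        · rintro ⟨t, -, hxq', -⟩; exact absurd hxq' hxq
      · by_cases hx2 : x = q
        · subst hx2
          have l1 : riverDist (x, y) (p, a) = |y| + |x - p| + |a| := by simp [riverDist, hx1]
          have l2 : riverDist (x, y) (x, b) = |y - b| := by simp [riverDist]
          rw [l1, l2, l3]
          have hxp : |x - p| = |p - x| := abs_sub_comm x p
          constructor
          · intro h1
            have h2 : |y - 0| = |y - b| + |b - 0| := by
              simp only [sub_zero]; linarith [hxp]
            have h3 := between_iff'.1 h2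
            simp only [sub_zero] at h3
            obtain ⟨t, ht, hy⟩ := (ray_iff hb').2 h3
            exact ⟨t, ht, rfl, hy⟩
          · rintro ⟨t, ht, -, rfl⟩
            have h3 : 0 ≤ (t * b - b) * b := by
              nlinarith [mul_nonneg (sub_nonneg.2 ht) (mul_self_nonneg b)]
            have h2 : |t * b - 0| = |t * b - b| + |b - 0| := by
              apply between_iff'.2; simpa using h3
            simp only [sub_zero] at h2
            linarith [hxp]
        · have l1 : riverDist (x, y) (p, a) = |y| + |x - p| + |a| := by simp [riverDist, hx1]
          have l2 : riverDist (x, y) (q, b) = |y| + |x - q| + |b| := by simp [riverDist, hx2]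
          rw [l1, l2, l3]
          constructor
          · intro h1
            exfalso
            have : |x - p| ≤ |x - q| + |q - p| := abs_sub_le x q p
            have hqp : |q - p| = |p - q| := abs_sub_comm q p
            linarith
          · rintro ⟨t, -, hxq', -⟩; exact absurd hxq' hx2
  · -- last branch: b = 0
    have hb0 : b = 0 := not_not.1 hb
    subst hb0
    have hpq : p ≠ q := by
      intro he
      exact h ⟨he, 0, ⟨le_rfl, zero_lt_one⟩, by simp⟩
    ext ⟨x, y⟩
    simp only [Cd, Set.mem_setOf_eq, ge_iff_le]
    have hpqabs : 0 < |p - q| := abs_pos.2 (sub_ne_zero.2 hpq)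
    have l3 : riverDist (p, a) (q, 0) = |a| + |p - q| := by
      simp [riverDist, hpq]
    by_cases hx1 : x = p
    · subst hx1
      have hxq : x ≠ q := hpq
      have l1 : riverDist (x, y) (x, a) = |y - a| := by simp [riverDist]
      have l2 : riverDist (x, y) (q, 0) = |y| + |x - q| := by simp [riverDist, hxq]
      rw [l1, l2, l3]
      constructor
      · intro h1
        exfalso
        have : |y - a| ≤ |y| + |a| := abs_sub y a
        linarith
      · intro h1
        exfalso
        nlinarith [mul_self_pos.2 (sub_ne_zero.2 hpq)]
    · by_cases hx2 : x = q
      · subst hx2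
        have l1 : riverDist (x, y) (p, a) = |y| + |x - p| + |a| := by simp [riverDist, hx1]
        have l2 : riverDist (x, y) (x, 0) = |y| := by simp [riverDist]
        rw [l1, l2, l3]
        have hxp : |x - p| = |p - x| := abs_sub_comm x p
        constructor
        · intro _; simp
        · intro _; linarith
      · have l1 : riverDist (x, y) (p, a) = |y| + |x - p| + |a| := by simp [riverDist, hx1]
        have l2 : riverDist (x, y) (q, 0) = |y| + |x - q| := by simp [riverDist, hx2]
        rw [l1, l2, l3]
        have hiff : |x - p| = |x - q| + |q - p| ↔ 0 ≤ (x - q) * (q - p) := between_iff'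
        have hqp : |q - p| = |p - q| := abs_sub_comm q p
        constructor
        · intro h1
          apply hiff.1
          linarith
        · intro h1
          have := hiff.2 h1
          linarith

lemma g_id {g : ℝ → ℝ} (hc : ContinuousOn g (Set.Ici 0)) (h0 : g 0 = 0) (h1 : g 1 = 1)
    (hadd : ∀ u v : ℝ, 0 ≤ u → 0 < v → g (u + v) = g u + g v) :
    ∀ u : ℝ, 0 ≤ u → g u = u := by
  have hadd' : ∀ u v : ℝ, 0 ≤ u → 0 ≤ v → g (u + v) = g u + g v := by
    intro u v hu hv
    rcases eq_or_lt_of_le hv with rfl | hv'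
    · simp [h0]
    · exact hadd u v hu hv'
  have hnat : ∀ (n : ℕ) (u : ℝ), 0 ≤ u → g (n * u) = n * g u := by
    intro n
    induction n with
    | zero => intro u _; simp [h0]
    | succ n ih =>
      intro u hu
      have : ((n : ℝ) + 1) * u = (n : ℝ) * u + u := by ring
      push_cast
      rw [this, hadd' _ _ (by positivity) hu, ih u hu]
      ring
  have hq : ∀ q : ℚ, 0 ≤ q → g (q : ℝ) = (q : ℝ) := by
    intro q hq0
    have hd : (0 : ℝ) < (q.den : ℝ) := by exact_mod_cast q.pos
    have hqr : 0 ≤ (q : ℝ) := by exact_mod_cast hq0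
    have hnum : 0 ≤ q.num := Rat.num_nonneg.2 hq0
    have e : (q.den : ℝ) * (q : ℝ) = (q.num : ℝ) := by
      rw [Rat.cast_def]
      field_simp
    have h2 : g ((q.den : ℝ) * (q : ℝ)) = (q.den : ℝ) * g (q : ℝ) := hnat q.den q hqr
    rw [e] at h2
    have e2 : (q.num : ℝ) = (q.num.toNat : ℝ) * 1 := by
      rw [mul_one]
      exact_mod_cast (Int.toNat_of_nonneg hnum).symm
    have h3 : g ((q.num : ℝ)) = (q.num : ℝ) := by
      rw [e2, hnat q.num.toNat 1 zero_le_one, h1, mul_one]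
    rw [h3] at h2
    have h4 : g (q : ℝ) = (q.num : ℝ) / (q.den : ℝ) := by
      rw [eq_div_iff hd.ne']
      linear_combination -h2
    rw [h4, Rat.cast_def]
  intro u hu
  have hGc : Continuous (fun x : ℝ => g (max x 0)) := by
    apply hc.comp_continuous (continuous_id.max continuous_const)
    intro x; exact le_max_right x 0
  have hHc : Continuous (fun x : ℝ => max x 0) :=
    continuous_id.max continuous_const
  have hdense : Dense {x : ℝ | x ≤ 0 ∨ ∃ q : ℚ, 0 ≤ q ∧ x = (q : ℝ)} := by
    rw [dense_iff_exists_between]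
    intro a b hab
    rcases lt_or_ge a 0 with ha | ha
    · rcases le_or_gt b 0 with hbl | hbl
      · exact ⟨(a + b) / 2, Or.inl (by linarith), by linarith, by linarith⟩
      · exact ⟨0, Or.inl le_rfl, ha, hbl⟩
    · obtain ⟨q, hq1, hq2⟩ := exists_rat_btwn hab
      have : (0 : ℚ) ≤ q := by
        have : (0:ℝ) ≤ (q:ℝ) := le_trans ha hq1.le
        exact_mod_cast this
      exact ⟨q, Or.inr ⟨q, this, rfl⟩, hq1, hq2⟩
  have hEq : Set.EqOn (fun x : ℝ => g (max x 0)) (fun x : ℝ => max x 0)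
      {x : ℝ | x ≤ 0 ∨ ∃ q : ℚ, 0 ≤ q ∧ x = (q : ℝ)} := by
    rintro x (hx | ⟨q, hq0, rfl⟩)
    · simp only
      rw [max_eq_right hx, h0]
    · have hqr : (0 : ℝ) ≤ (q : ℝ) := by exact_mod_cast hq0
      simp only
      rw [max_eq_left hqr, hq q hq0]
  have heq := Continuous.ext_on hdense hGc hHc hEq
  have := congrFun heq u
  simp only [max_eq_left hu] at this
  exact this

lemma enorm2_vert (x y : ℝ × ℝ) (h : x.1 = y.1) :
    enorm2 (x - y) = |x.2 - y.2| := by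
  rw [enorm2]
  have h1 : (x - y).1 = 0 := by simp [Prod.fst_sub, h]
  have h2 : (x - y).2 = x.2 - y.2 := rfl
  rw [h1, h2, show (0:ℝ)^2 + (x.2 - y.2)^2 = (x.2 - y.2)^2 by ring, Real.sqrt_sq_eq_abs]

lemma enorm2_horiz (x y : ℝ × ℝ) (h1 : x.2 = 0) (h2 : y.2 = 0) :
    enorm2 (x - y) = |x.1 - y.1| := by
  rw [enorm2]
  have ha : (x - y).2 = 0 := by simp [Prod.snd_sub, h1, h2]
  have hb : (x - y).1 = x.1 - y.1 := rfl
  rw [ha, hb, show (x.1 - y.1)^2 + (0:ℝ)^2 = (x.1 - y.1)^2 by ring, Real.sqrt_sq_eq_abs]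

theorem river_identification
    (d' : ℝ × ℝ → ℝ × ℝ → ℝ)
    (hd_eq : ∀ x y, d' x y = 0 ↔ x = y)
    (hd_symm : ∀ x y, d' x y = d' y x)
    (hd_tri : ∀ x y z, d' x z ≤ d' x y + d' y z)
    (g₁ g₂ : ℝ → ℝ)
    (hg₁_cont : ContinuousOn g₁ (Set.Ici 0))
    (hg₂_cont : ContinuousOn g₂ (Set.Ici 0))
    (hg₁_nonneg : ∀ u ∈ Set.Ici (0 : ℝ), 0 ≤ g₁ u)
    (hg₂_nonneg : ∀ u ∈ Set.Ici (0 : ℝ), 0 ≤ g₂ u)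
    (hg₁_one : g₁ 1 = 1) (hg₂_one : g₂ 1 = 1)
    (hd_vert : ∀ x y : ℝ × ℝ, x.1 = y.1 → d' x y = g₁ (enorm2 (x - y)))
    (hd_horiz : ∀ x y : ℝ × ℝ, x.2 = 0 → y.2 = 0 → d' x y = g₂ (enorm2 (x - y))) :
    (∀ x y, d' x y = riverDist x y) ↔
    (∀ P1 P2, Cd d' P1 P2 = Criv P1 P2) := by
  constructor
  · intro hr P1 P2
    have : Cd d' P1 P2 = Cd riverDist P1 P2 := by
      ext X; simp only [Cd, Set.mem_setOf_eq, hr]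
    rw [this, Cd_riv]
  · intro hC x y
    have hmem : ∀ P1 P2 X : ℝ × ℝ, X ∈ Criv P1 P2 → d' X P1 = d' X P2 + d' P1 P2 := by
      intro P1 P2 X hX
      rw [← hC P1 P2] at hX
      exact hX
    have henorm0 : ∀ z : ℝ × ℝ, enorm2 (z - z) = 0 := by
      intro z
      rw [enorm2_vert z z rfl, sub_self, abs_zero]
    have hg10 : g₁ 0 = 0 := by
      have h := hd_vert 0 0 rfl
      rw [(hd_eq 0 0).mpr rfl, henorm0] at h
      exact h.symm
    have hg20 : g₂ 0 = 0 := by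
      have h := hd_horiz 0 0 rfl rfl
      rw [(hd_eq 0 0).mpr rfl, henorm0] at h
      exact h.symm
    have hadd1 : ∀ u v : ℝ, 0 ≤ u → 0 < v → g₁ (u + v) = g₁ u + g₁ v := by
      intro u v hu hv
      have hX : ((0, -u) : ℝ × ℝ) ∈ Criv (0, v) (0, 0) := by
        unfold Criv
        have hne : ((0, v) : ℝ × ℝ) ≠ (0, 0) := by
          simp [Prod.ext_iff, hv.ne']
        have hcond : ((0 : ℝ), v).1 = ((0 : ℝ), (0 : ℝ)).1 ∧
            ∃ s : ℝ, s ∈ Set.Ico (0 : ℝ) 1 ∧ ((0 : ℝ), (0 : ℝ)).2 = s * ((0 : ℝ), v).2 :=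
          ⟨rfl, 0, ⟨le_rfl, zero_lt_one⟩, by simp⟩
        rw [if_neg hne, dif_pos hcond]
        refine ⟨Set.mem_univ _, ?_⟩
        rintro ⟨t, ht, heq⟩
        have hs0 : 0 ≤ Classical.choose hcond.2 :=
          ((Classical.choose_spec hcond.2).1).1
        have h2 : -u = t * v := congrArg Prod.snd heq
        nlinarith [mul_pos (lt_of_le_of_lt hs0 ht) hv]
      have h := hmem _ _ _ hX
      rw [hd_vert (0, -u) (0, v) rfl, hd_vert (0, -u) (0, 0) rfl,
        hd_vert (0, v) (0, 0) rfl, enorm2_vert (0, -u) (0, v) rfl,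
        enorm2_vert (0, -u) (0, 0) rfl, enorm2_vert (0, v) (0, 0) rfl] at h
      dsimp only at h
      rw [show |(-u : ℝ) - v| = u + v by rw [abs_of_nonpos (by linarith)]; ring,
        show |(-u : ℝ) - 0| = u by rw [sub_zero, abs_neg, abs_of_nonneg hu],
        show |v - (0 : ℝ)| = v by rw [sub_zero, abs_of_pos hv]] at h
      exact h
    have hadd2 : ∀ u v : ℝ, 0 ≤ u → 0 < v → g₂ (u + v) = g₂ u + g₂ v := by
      intro u v hu hv
      have hX : ((u + v, 0) : ℝ × ℝ) ∈ Criv (0, 0) (v, 0) := by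
        unfold Criv
        have hne : ((0, 0) : ℝ × ℝ) ≠ (v, 0) := by
          simp [Prod.ext_iff, hv.ne]
        have hnc : ¬(((0 : ℝ), (0 : ℝ)).1 = (v, (0 : ℝ)).1 ∧
            ∃ s : ℝ, s ∈ Set.Ico (0 : ℝ) 1 ∧ (v, (0 : ℝ)).2 = s * ((0 : ℝ), (0 : ℝ)).2) := by
          rintro ⟨h1, -⟩
          exact hv.ne h1
        rw [if_neg hne, dif_neg hnc, if_neg (by simp)]
        show ((u + v, (0 : ℝ)).1 - (v, (0 : ℝ)).1) * ((v, (0 : ℝ)).1 - ((0 : ℝ), (0 : ℝ)).1) ≥ 0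
        dsimp only
        rw [show u + v - v = u by ring, sub_zero]
        exact mul_nonneg hu hv.le
      have h := hmem _ _ _ hX
      rw [hd_horiz (u + v, 0) (0, 0) rfl rfl, hd_horiz (u + v, 0) (v, 0) rfl rfl,
        hd_horiz (0, 0) (v, 0) rfl rfl, enorm2_horiz (u + v, 0) (0, 0) rfl rfl,
        enorm2_horiz (u + v, 0) (v, 0) rfl rfl, enorm2_horiz (0, 0) (v, 0) rfl rfl] at h
      dsimp only at h
      rw [show |u + v - (0 : ℝ)| = u + v by rw [sub_zero, abs_of_nonneg (by linarith)],
        show |u + v - v| = u by rw [show u + v - v = u by ring, abs_of_nonneg hu],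
        show |(0 : ℝ) - v| = v by rw [zero_sub, abs_neg, abs_of_pos hv]] at h
      exact h
    have hid1 : ∀ u : ℝ, 0 ≤ u → g₁ u = u := g_id hg₁_cont hg10 hg₁_one hadd1
    have hid2 : ∀ u : ℝ, 0 ≤ u → g₂ u = u := g_id hg₂_cont hg20 hg₂_one hadd2
    by_cases hxy : x.1 = y.1
    · rw [hd_vert x y hxy, enorm2_vert x y hxy, hid1 _ (abs_nonneg _)]
      rw [riverDist, if_pos hxy]
    · obtain ⟨a, α⟩ := x
      obtain ⟨b, β⟩ := y
      have hab : a ≠ b := hxy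
      have hA0 : d' (a, α) (a, 0) = |α| := by
        rw [hd_vert (a, α) (a, 0) rfl, enorm2_vert (a, α) (a, 0) rfl]
        dsimp only
        rw [sub_zero]
        exact hid1 _ (abs_nonneg _)
      have hB0 : d' (b, β) (b, 0) = |β| := by
        rw [hd_vert (b, β) (b, 0) rfl, enorm2_vert (b, β) (b, 0) rfl]
        dsimp only
        rw [sub_zero]
        exact hid1 _ (abs_nonneg _)
      have hH : d' (b, 0) (a, 0) = |b - a| := by
        rw [hd_horiz (b, 0) (a, 0) rfl rfl, enorm2_horiz (b, 0) (a, 0) rfl rfl]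
        dsimp only
        exact hid2 _ (abs_nonneg _)
      have c1 : ((b, β) : ℝ × ℝ) ∈ Criv (a, α) (b, 0) := by
        unfold Criv
        rw [if_neg, dif_neg, if_neg]
        · show ((b, β).1 - (b, (0 : ℝ)).1) * ((b, (0 : ℝ)).1 - (a, α).1) ≥ 0
          simp
        · simp
        · rintro ⟨h1, -⟩
          exact hab h1
        · intro he
          exact hab (congrArg Prod.fst he)
      have e1 := hmem _ _ _ c1
      have e2 : d' (b, 0) (a, α) = d' (b, 0) (a, 0) + d' (a, α) (a, 0) := by
        by_cases hα : α = 0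
        · subst hα
          have hz : d' (a, 0) (a, 0) = 0 := (hd_eq _ _).mpr rfl
          rw [hz, add_zero]
        · have c2 : ((b, 0) : ℝ × ℝ) ∈ Criv (a, α) (a, 0) := by
            unfold Criv
            have hne : ((a, α) : ℝ × ℝ) ≠ (a, 0) := by
              simp [Prod.ext_iff, hα]
            have hcond : ((a : ℝ), α).1 = (a, (0 : ℝ)).1 ∧
                ∃ s : ℝ, s ∈ Set.Ico (0 : ℝ) 1 ∧ (a, (0 : ℝ)).2 = s * (a, α).2 :=
              ⟨rfl, 0, ⟨le_rfl, zero_lt_one⟩, by simp⟩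
            rw [if_neg hne, dif_pos hcond]
            refine ⟨Set.mem_univ _, ?_⟩
            rintro ⟨t, ht, heq⟩
            have hba : b = a := congrArg Prod.fst heq
            exact hab hba.symm
          exact hmem _ _ _ c2
      rw [riverDist, if_neg hxy]
      have hsymm1 : d' (a, α) (b, β) = d' (b, β) (a, α) := hd_symm _ _
      have hsymm2 : d' (a, α) (b, 0) = d' (b, 0) (a, α) := hd_symm _ _
      dsimp only
      rw [hsymm1, e1, hB0, hsymm2, e2, hH, hA0, abs_sub_comm b a]
      ring
end

section
/- Let (M,d) be a metric space satisfying the four-point condition: for all A, B, C, D ∈ M, d(A,B) + d(C,D) ≤ max(d(A,C) + d(B,D), d(A,D) + d(B,C)). Fix O ∈ M and define K(X,Y) = (1/2)(d(O,X) + d(O,Y) − d(X,Y)). Then K is positive semidefinite: for every n, every family of points x₁, …, xₙ ∈ M and every family of reals c₁, …, cₙ ∈ ℝ, the double sum ∑ᵢ∑ⱼ cᵢ·cⱼ·K(xᵢ,xⱼ) is nonnegative. -/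
open Finset

private lemma aux_kernel_psd {ι : Type*} [DecidableEq ι] :
    ∀ (N : ℕ) (s : Finset ι) (K : ι → ι → ℝ), s.card ≤ N →
    (∀ i ∈ s, ∀ j ∈ s, K i j = K j i) →
    (∀ i ∈ s, ∀ j ∈ s, 0 ≤ K i j) →
    (∀ i ∈ s, ∀ j ∈ s, K i j ≤ K i i) →
    (∀ i ∈ s, ∀ j ∈ s, ∀ k ∈ s, min (K i k) (K k j) ≤ K i j) →
    ∀ c : ι → ℝ, 0 ≤ ∑ i ∈ s, ∑ j ∈ s, c i * c j * K i j := by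
  classical
  intro N
  induction N with
  | zero =>
    intro s K hcard _ _ _ _ c
    simp [Finset.card_eq_zero.mp (Nat.le_zero.mp hcard)]
  | succ N ih =>
    intro s K hcard hsymm hnn hdiag hmin c
    rcases s.eq_empty_or_nonempty with rfl | hne
    · simp
    obtain ⟨p, hp, hpmin⟩ := (s ×ˢ s).exists_min_image (fun q => K q.1 q.2)
      (hne.product hne)
    obtain ⟨ha, hb⟩ := Finset.mem_product.mp hp
    set a := p.1 with haa
    set b := p.2 with hbb
    set m := K a b with hm
    have hm0 : 0 ≤ m := hnn a ha b hb
    set K' : ι → ι → ℝ := fun i j => K i j - m with hK'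
    have hpmin' : ∀ i ∈ s, ∀ j ∈ s, m ≤ K i j := by
      intro i hi j hj
      exact hpmin (i, j) (Finset.mem_product.mpr ⟨hi, hj⟩)
    have hsymm' : ∀ i ∈ s, ∀ j ∈ s, K' i j = K' j i := by
      intro i hi j hj; simp only [hK']; rw [hsymm i hi j hj]
    have hnn' : ∀ i ∈ s, ∀ j ∈ s, 0 ≤ K' i j := by
      intro i hi j hj; simp only [hK']; linarith [hpmin' i hi j hj]
    have hdiag' : ∀ i ∈ s, ∀ j ∈ s, K' i j ≤ K' i i := by
      intro i hi j hj; simp only [hK']; linarith [hdiag i hi j hj]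
    have hmin' : ∀ i ∈ s, ∀ j ∈ s, ∀ k ∈ s, min (K' i k) (K' k j) ≤ K' i j := by
      intro i hi j hj k hk
      simp only [hK']
      rcases min_le_iff.mp (hmin i hi j hj k hk) with h | h
      · exact le_trans (min_le_left _ _) (by linarith)
      · exact le_trans (min_le_right _ _) (by linarith)
    -- reduce to K'
    have key : 0 ≤ ∑ i ∈ s, ∑ j ∈ s, c i * c j * K' i j → 
        0 ≤ ∑ i ∈ s, ∑ j ∈ s, c i * c j * K i j := by
      intro h
      have expand : ∑ i ∈ s, ∑ j ∈ s, c i * c j * K i j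
          = (∑ i ∈ s, ∑ j ∈ s, c i * c j * K' i j) + m * (∑ i ∈ s, c i) ^ 2 := by
        rw [sq, Finset.sum_mul_sum, Finset.mul_sum]
        rw [← Finset.sum_add_distrib]
        refine Finset.sum_congr rfl fun i _ => ?_
        rw [Finset.mul_sum, ← Finset.sum_add_distrib]
        refine Finset.sum_congr rfl fun j _ => ?_
        simp only [hK']; ring
      rw [expand]
      have : 0 ≤ m * (∑ i ∈ s, c i) ^ 2 := mul_nonneg hm0 (sq_nonneg _)
      linarith
    apply key
    have hab0 : K' a b = 0 := by simp [hK', hm]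
    by_cases haa0 : K' a a = 0
    · -- row a of K' vanishes on s; drop a
      have hrow : ∀ j ∈ s, K' a j = 0 := by
        intro j hj
        have h1 := hnn' a ha j hj
        have h2 := hdiag' a ha j hj
        linarith
      have hcol : ∀ j ∈ s, K' j a = 0 := by
        intro j hj; rw [← hsymm' a ha j hj]; exact hrow j hj
      have hsub : s.erase a ⊆ s := Finset.erase_subset _ _
      have inner : ∀ i ∈ s, ∑ j ∈ s, c i * c j * K' i j
          = ∑ j ∈ s.erase a, c i * c j * K' i j := by
        intro i hi
        rw [← Finset.sum_erase_add s _ ha]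
        rw [hcol i hi, mul_zero, add_zero]
      calc (0:ℝ) ≤ ∑ i ∈ s.erase a, ∑ j ∈ s.erase a, c i * c j * K' i j := by
            refine ih (s.erase a) K' ?_ ?_ ?_ ?_ ?_ c
            · have := Finset.card_erase_of_mem ha
              omega
            · exact fun i hi j hj => hsymm' i (hsub hi) j (hsub hj)
            · exact fun i hi j hj => hnn' i (hsub hi) j (hsub hj)
            · exact fun i hi j hj => hdiag' i (hsub hi) j (hsub hj)
            · exact fun i hi j hj k hk => hmin' i (hsub hi) j (hsub hj) k (hsub hk)
        _ = ∑ i ∈ s, ∑ j ∈ s, c i * c j * K' i j := by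
            rw [← Finset.sum_erase_add s _ ha]
            have : ∑ j ∈ s, c a * c j * K' a j = 0 := by
              refine Finset.sum_eq_zero fun j hj => ?_
              rw [hrow j hj]; ring
            rw [this, add_zero]
            refine Finset.sum_congr rfl fun i hi => ?_
            exact (inner i (hsub hi)).symm
    · -- split s into t and its complement
      have haa : (0:ℝ) < K' a a := lt_of_le_of_ne (hnn' a ha a ha) (Ne.symm haa0)
      set P : ι → Prop := fun i => 0 < K' a i with hP
      set t := s.filter P with ht
      set u := s.filter (fun i => ¬ P i) with hu
      have htsub : t ⊆ s := Finset.filter_subset _ _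
      have husub : u ⊆ s := Finset.filter_subset _ _
      have hat : a ∈ t := Finset.mem_filter.mpr ⟨ha, haa⟩
      have hbu : b ∈ u := by
        refine Finset.mem_filter.mpr ⟨hb, ?_⟩
        simp only [hP]; rw [hab0]; exact lt_irrefl 0
      have hcross : ∀ i ∈ t, ∀ j ∈ u, K' i j = 0 := by
        intro i hi j hj
        obtain ⟨his, hiP⟩ := Finset.mem_filter.mp hi
        obtain ⟨hjs, hjP⟩ := Finset.mem_filter.mp hj
        by_contra hne0
        have hpos : 0 < K' i j := lt_of_le_of_ne (hnn' i his j hjs) (Ne.symm hne0)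
        have := hmin' a ha j hjs i his
        have : (0:ℝ) < K' a j := lt_of_lt_of_le (lt_min hiP hpos) this
        exact hjP this
      have hcross' : ∀ i ∈ u, ∀ j ∈ t, K' i j = 0 := by
        intro i hi j hj
        rw [hsymm' i (husub hi) j (htsub hj)]
        exact hcross j hj i hi
      have htc : t.card ≤ N := by
        have h1 : t ⊆ s.erase b := by
          intro i hi
          refine Finset.mem_erase.mpr ⟨?_, htsub hi⟩
          rintro rfl; exact absurd hi (fun h => by
            have := (Finset.mem_filter.mp h).2
            have := (Finset.mem_filter.mp hbu).2
            exact this (Finset.mem_filter.mp h).2)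
        have := Finset.card_le_card h1
        have := Finset.card_erase_of_mem hb
        omega
      have huc : u.card ≤ N := by
        have h1 : u ⊆ s.erase a := by
          intro i hi
          refine Finset.mem_erase.mpr ⟨?_, husub hi⟩
          rintro rfl
          exact (Finset.mem_filter.mp hi).2 haa
        have := Finset.card_le_card h1
        have := Finset.card_erase_of_mem ha
        omega
      have hT : 0 ≤ ∑ i ∈ t, ∑ j ∈ t, c i * c j * K' i j := by
        refine ih t K' htc ?_ ?_ ?_ ?_ c
        · exact fun i hi j hj => hsymm' i (htsub hi) j (htsub hj)
        · exact fun i hi j hj => hnn' i (htsub hi) j (htsub hj)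
        · exact fun i hi j hj => hdiag' i (htsub hi) j (htsub hj)
        · exact fun i hi j hj k hk => hmin' i (htsub hi) j (htsub hj) k (htsub hk)
      have hU : 0 ≤ ∑ i ∈ u, ∑ j ∈ u, c i * c j * K' i j := by
        refine ih u K' huc ?_ ?_ ?_ ?_ c
        · exact fun i hi j hj => hsymm' i (husub hi) j (husub hj)
        · exact fun i hi j hj => hnn' i (husub hi) j (husub hj)
        · exact fun i hi j hj => hdiag' i (husub hi) j (husub hj)
        · exact fun i hi j hj k hk => hmin' i (husub hi) j (husub hj) k (husub hk)
      have split : ∑ i ∈ s, ∑ j ∈ s, c i * c j * K' i j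
          = (∑ i ∈ t, ∑ j ∈ t, c i * c j * K' i j)
            + (∑ i ∈ u, ∑ j ∈ u, c i * c j * K' i j) := by
        rw [← Finset.sum_filter_add_sum_filter_not s P
          (fun i => ∑ j ∈ s, c i * c j * K' i j)]
        congr 1
        · refine Finset.sum_congr rfl fun i hi => ?_
          rw [← Finset.sum_filter_add_sum_filter_not s P (fun j => c i * c j * K' i j)]
          have : ∑ j ∈ u, c i * c j * K' i j = 0 :=
            Finset.sum_eq_zero fun j hj => by rw [hcross i hi j hj]; ring
          rw [← ht, ← hu, this, add_zero]
        · refine Finset.sum_congr rfl fun i hi => ?_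
          rw [← Finset.sum_filter_add_sum_filter_not s P (fun j => c i * c j * K' i j)]
          have : ∑ j ∈ t, c i * c j * K' i j = 0 :=
            Finset.sum_eq_zero fun j hj => by rw [hcross' i hi j hj]; ring
          rw [← ht, ← hu, this, zero_add]
      rw [split]
      linarith

theorem four_point_condition_kernel_posdef
    {M : Type*} (d : M → M → ℝ)
    (hd_eq : ∀ x y, d x y = 0 ↔ x = y)
    (hd_symm : ∀ x y, d x y = d y x)
    (hd_tri : ∀ x y z, d x z ≤ d x y + d y z)
    (h4pc : ∀ A B C D : M, d A B + d C D ≤ max (d A C + d B D) (d A D + d B C))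
    (O : M)
    (K : M → M → ℝ)
    (hK : ∀ X Y, K X Y = (1 / 2) * (d O X + d O Y - d X Y)) :
    ∀ (n : ℕ) (x : Fin n → M) (c : Fin n → ℝ),
      0 ≤ ∑ i : Fin n, ∑ j : Fin n, c i * c j * K (x i) (x j) := by
  intro n x c
  have hsymm : ∀ X Y, K X Y = K Y X := by
    intro X Y; rw [hK, hK, hd_symm X Y]; ring
  have hnn : ∀ X Y, 0 ≤ K X Y := by
    intro X Y
    have h1 := hd_tri X O Y
    have h2 := hd_symm X O
    rw [hK]; linarith
  have hdiag : ∀ X Y, K X Y ≤ K X X := by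
    intro X Y
    have h1 := hd_tri O X Y
    have h2 := hd_eq X X
    have h3 : d X X = 0 := h2.mpr rfl
    rw [hK, hK, h3]; linarith
  have hmin : ∀ X Y Z, min (K X Z) (K Z Y) ≤ K X Y := by
    intro X Y Z
    have h := h4pc X Y Z O
    rcases le_max_iff.mp h with h1 | h1
    · refine le_trans (min_le_left _ _) ?_
      rw [hK, hK]
      have e1 := hd_symm Y O
      have e2 := hd_symm Z O
      linarith
    · refine le_trans (min_le_right _ _) ?_
      rw [hK, hK]
      have e1 := hd_symm X O
      have e2 := hd_symm Y Z
      have e3 := hd_symm Z O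
      have e4 := hd_symm Z Y
      linarith
  exact aux_kernel_psd n Finset.univ (fun i j => K (x i) (x j))
    (Finset.card_fin n).le
    (fun i _ j _ => hsymm _ _)
    (fun i _ j _ => hnn _ _)
    (fun i _ j _ => hdiag _ _)
    (fun i _ j _ k _ => hmin _ _ _)
    c
end
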